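/- arXiv:1605.01482 — 12 statements merged into one kernel-verified Lean document; each statement's English description precedes it below -/
import Mathlib

section
/- Let P(z) = P0 + P1·z + P2·z² be a regular quadratic matrix polynomial with P0, P1, P2 ∈ ℂ^{n×n} (i.e., the scalar polynomial det P(z) is not the zero polynomial), and let (X, U), with X ∈ ℂ^{ℓ×ℓ} and U ∈ ℂ^{ℓ×n}, be a left invariant pair of P(z). Then the characteristic polynomial of X divides det P(z) in ℂ[z]; in particular, every eigenvalue of X, counted with algebraic multiplicity, is a finite eigenvalue of P(z). -/
open Polynomial Matrix

/-- The scalar polynomial `det (P0 + P1 z + P2 z²)` of a quadratic matrix polynomial. -/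
noncomputable def quadDetPoly {n : ℕ} (P0 P1 P2 : Matrix (Fin n) (Fin n) ℂ) : Polynomial ℂ :=
  Matrix.det (P0.map Polynomial.C + (Polynomial.X : Polynomial ℂ) • P1.map Polynomial.C
    + (Polynomial.X ^ 2 : Polynomial ℂ) • P2.map Polynomial.C)

/-!
Put `W = [U, XU]` and linearize `P` by the companion pencil `A₀ + z A₁` with
`A₀ = [[P₀, 0], [0, 1]]`, `A₁ = [[P₁, -1], [P₂, 0]]`, whose determinant is `det P(z)`.
The invariant-pair equation becomes `W A₀ + X W A₁ = 0`, i.e.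
`W (A₀ + z A₁) = (z - X) W A₁`.
Completing the independent rows of `W` to an invertible matrix `S`, the product `S (A₀ + z A₁)`
factors as `diag(z - X, 1)` times a polynomial matrix, so `det S · det P(z)` is a multiple of
`det (z - X) = charpoly X`, and `det S` is a nonzero constant.
-/

namespace Matrix

variable {ι κ m : Type*} [Fintype ι] [Fintype m]

theorem linearIndependent_row_of_rank_eq_card {K : Type*} [Field K] {A : Matrix ι m K}
    (h : A.rank = Fintype.card ι) : LinearIndependent K A.row :=
  linearIndependent_iff_card_eq_finrank_span.mpr (by rw [← h, rank_eq_finrank_span_row]; rfl)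

theorem exists_isUnit_fromRows_submatrix [DecidableEq ι] {K : Type*} [Field K] {A : Matrix ι m K}
    (hA : LinearIndependent K A.row) :
    ∃ (k : ℕ) (V : Matrix (Fin k) m K) (e : ι ⊕ Fin k ≃ m),
      IsUnit ((fromRows A V).submatrix id e) := by
  let W := Submodule.span K (Set.range A.row)
  let b := Module.Basis.sumQuot (.span hA) (Module.finBasis K ((m → K) ⧸ W))
  let e := b.indexEquiv (Pi.basisFun K m)
  refine ⟨_, of fun j => b (Sum.inr j), e, ?_⟩
  have hrows : fromRows A (of fun j => b (Sum.inr j)) = of b := by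
    ext (i | j) c <;> simp [b, Module.Basis.span_apply]
  rw [hrows, ← linearIndependent_rows_iff_isUnit]
  exact (b.map (LinearEquiv.funCongrLeft K K e)).linearIndependent

theorem det_dvd_det_of_mul_eq_mul [Fintype κ] [DecidableEq ι] [DecidableEq κ] [DecidableEq m]
    {R : Type*} [CommRing R] (e : ι ⊕ κ ≃ m) {A : Matrix ι m R}
    {V : Matrix κ m R} (hS : IsUnit ((fromRows A V).submatrix id e)) {M : Matrix ι ι R}
    {L : Matrix m m R} {T : Matrix ι m R} (h : A * L = M * T) : M.det ∣ L.det := by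
  have hblock :
      fromRows (M * T) (V * L) = fromBlocks M 0 0 (1 : Matrix κ κ R) * fromRows T (V * L) := by
    rw [fromBlocks_mul_fromRows]; simp
  have hSL : (fromRows A V).submatrix id e * L.submatrix e e
      = fromBlocks M 0 0 (1 : Matrix κ κ R) * (fromRows T (V * L)).submatrix id e := by
    rw [submatrix_mul_equiv, fromRows_mul, h, hblock]; rfl
  have hdet := congrArg det hSL
  rw [det_mul, det_mul, det_submatrix_equiv_self, det_fromBlocks_zero₁₂, det_one, mul_one]
    at hdet
  exact ((isUnit_iff_isUnit_det _).mp hS).dvd_mul_left.mp (hdet ▸ dvd_mul_right _ _)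

theorem charpoly_dvd_det_of_map_mul_eq_charmatrix_mul [DecidableEq ι] [DecidableEq m]
    {K : Type*} [Field K] {X : Matrix ι ι K} {A : Matrix ι m K}
    (hA : LinearIndependent K A.row) {L : Matrix m m K[X]} {T : Matrix ι m K[X]}
    (h : A.map C * L = charmatrix X * T) : X.charpoly ∣ L.det := by
  obtain ⟨k, V, e, hS⟩ := exists_isUnit_fromRows_submatrix hA
  refine det_dvd_det_of_mul_eq_mul e (V := V.map C) ?_ h
  rw [← fromRows_map, submatrix_map]
  exact hS.map (C : K →+* K[X]).mapMatrix

theorem map_mul_pencil_eq_charmatrix_mul [DecidableEq ι] {K : Type*} [Field K]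
    {A₀ A₁ : Matrix m m K} {X : Matrix ι ι K} {W : Matrix ι m K}
    (h : W * A₀ + X * W * A₁ = 0) :
    W.map C * (A₀.map C + (Polynomial.X : K[X]) • A₁.map C)
      = charmatrix X * (W * A₁).map C := by
  have h' : (X * W * A₁).map C = -(W * A₀).map (C : K → K[X]) := by
    rw [eq_neg_of_add_eq_zero_right h, Matrix.map_neg _ (map_neg C)]
  rw [charmatrix, Matrix.sub_mul, RingHom.mapMatrix_apply, ← Matrix.map_mul, ← Matrix.mul_assoc,
    h', sub_neg_eq_add, Matrix.mul_add, Matrix.map_mul, Matrix.map_mul, add_comm, scalar_apply,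
    ← smul_eq_diagonal_mul, Matrix.mul_smul]

theorem charpoly_dvd_det_pencil_of_left_invariant [DecidableEq ι] [DecidableEq m]
    {K : Type*} [Field K] {A₀ A₁ : Matrix m m K} {X : Matrix ι ι K} {W : Matrix ι m K}
    (hW : LinearIndependent K W.row) (h : W * A₀ + X * W * A₁ = 0) :
    X.charpoly ∣ (A₀.map C + (Polynomial.X : K[X]) • A₁.map C).det :=
  charpoly_dvd_det_of_map_mul_eq_charmatrix_mul hW (map_mul_pencil_eq_charmatrix_mul h)

end Matrix

section Companion

variable {R n ι : Type*} [CommRing R] [Fintype n] [DecidableEq n]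

def companion₀ (P₀ : Matrix n n R) : Matrix (n ⊕ n) (n ⊕ n) R := fromBlocks P₀ 0 0 1

def companion₁ (P₁ P₂ : Matrix n n R) : Matrix (n ⊕ n) (n ⊕ n) R :=
  fromBlocks P₁ (-1) P₂ 0

theorem det_companion_pencil (P₀ P₁ P₂ : Matrix n n R) :
    ((companion₀ P₀).map C + (Polynomial.X : R[X]) • (companion₁ P₁ P₂).map C).det
      = (P₀.map C + (Polynomial.X : R[X]) • P₁.map C
          + (Polynomial.X ^ 2 : R[X]) • P₂.map C).det := by
  rw [companion₀, companion₁, fromBlocks_map, fromBlocks_map, fromBlocks_smul, fromBlocks_add]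
  simp [det_fromBlocks_one₂₂, pow_two, smul_smul, Matrix.map_neg, Matrix.map_one]

theorem fromCols_mul_companion_add_eq_zero [Fintype ι] [DecidableEq ι]
    {P₀ P₁ P₂ : Matrix n n R} {X : Matrix ι ι R} {U : Matrix ι n R}
    (h : U * P₀ + X * U * P₁ + X ^ 2 * U * P₂ = 0) :
    fromCols U (X * U) * companion₀ P₀ + X * fromCols U (X * U) * companion₁ P₁ P₂
      = 0 := by
  have h' : U * P₀ + (X * U * P₁ + X * (X * U) * P₂) = 0 := by
    rw [← h, pow_two, add_assoc, Matrix.mul_assoc X X U]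
  rw [companion₀, companion₁, fromCols_mul_fromBlocks, mul_fromCols, fromCols_mul_fromBlocks]
  ext i (j | j)
  · simpa using congrFun (congrFun h' i) j
  · simp

end Companion

theorem charpoly_dvd_det_of_left_invariant_pair_general {n ℓ : ℕ}
    (P0 P1 P2 : Matrix (Fin n) (Fin n) ℂ)
    (X : Matrix (Fin ℓ) (Fin ℓ) ℂ) (U : Matrix (Fin ℓ) (Fin n) ℂ)
    (heq : U * P0 + X * U * P1 + X ^ 2 * U * P2 = 0)
    (hrank : (Matrix.fromCols U (X * U)).rank = ℓ) :
    X.charpoly ∣ quadDetPoly P0 P1 P2 := by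
  have hrows : LinearIndependent ℂ (fromCols U (X * U)).row :=
    linearIndependent_row_of_rank_eq_card (hrank.trans (Fintype.card_fin ℓ).symm)
  rw [quadDetPoly, ← det_companion_pencil]
  exact charpoly_dvd_det_pencil_of_left_invariant hrows (fromCols_mul_companion_add_eq_zero heq)

/-- If `(X, U)` is a left invariant pair of the regular quadratic matrix polynomial
`P(z) = P0 + P1 z + P2 z²`, then the characteristic polynomial of `X` divides `det P(z)`. -/
theorem charpoly_dvd_det_of_left_invariant_pair {n ℓ : ℕ}
    (P0 P1 P2 : Matrix (Fin n) (Fin n) ℂ)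
    (hreg : quadDetPoly P0 P1 P2 ≠ 0)
    (X : Matrix (Fin ℓ) (Fin ℓ) ℂ) (U : Matrix (Fin ℓ) (Fin n) ℂ)
    (heq : U * P0 + X * U * P1 + X ^ 2 * U * P2 = 0)
    (hrank : (Matrix.fromCols U (X * U)).rank = ℓ) :
    X.charpoly ∣ quadDetPoly P0 P1 P2 :=
  charpoly_dvd_det_of_left_invariant_pair_general P0 P1 P2 X U heq hrank
end

section
/- Let (X, U) with X ∈ ℂ^{ℓ×ℓ}, U ∈ ℂ^{ℓ×n} be a left invariant pair of the quadratic matrix polynomial P(z) = P0 + P1·z + P2·z², and let S(z) = S0 + S1·z with S0, S1 ∈ ℂ^{n×n}. Write P(z)·S(z) = T0 + T1·z + T2·z² + T3·z³, so T0 = P0·S0, T1 = P0·S1 + P1·S0, T2 = P1·S1 + P2·S0, T3 = P2·S1. Then U·T0 + X·U·T1 + X²·U·T2 + X³·U·T3 = 0 and the ℓ×3n matrix [U, X·U, X²·U] has full row rank ℓ; i.e., (X, U) is a left invariant pair of the cubic matrix polynomial P(z)·S(z). -/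
open Matrix

theorem Matrix.rank_fromCols_le_rank_fromCols_fromCols {R m n₁ n₂ n₃ : Type*}
    [CommSemiring R] [StrongRankCondition R] [Fintype n₁] [Fintype n₂] [Fintype n₃]
    (A : Matrix m n₁ R) (B : Matrix m n₂ R) (C : Matrix m n₃ R) :
    (fromCols A B).rank ≤ (fromCols A (fromCols B C)).rank := by
  convert rank_submatrix_le (fromCols A (fromCols B C)) id (Sum.map id Sum.inl) using 2
  ext i (j | j) <;> rfl

theorem Matrix.quadratic_left_eval_mul_linear {R l n : Type*} [Semiring R] [Fintype l]
    [Fintype n] [DecidableEq l] (X : Matrix l l R) (U : Matrix l n R)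
    (P0 P1 P2 S0 S1 : Matrix n n R) :
    U * (P0 * S0) + X * U * (P0 * S1 + P1 * S0) + X ^ 2 * U * (P1 * S1 + P2 * S0) +
        X ^ 3 * U * (P2 * S1) =
      (U * P0 + X * U * P1 + X ^ 2 * U * P2) * S0 +
        X * ((U * P0 + X * U * P1 + X ^ 2 * U * P2) * S1) := by
  simp only [Matrix.mul_add, Matrix.add_mul, Matrix.mul_assoc, pow_succ, pow_zero, Matrix.one_mul]
  abel

/-- If `(X, U)` is a left invariant pair of the quadratic matrix polynomial
`P(z) = P0 + P1 z + P2 z²` and `S(z) = S0 + S1 z`, then `(X, U)` is a left invariant pair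
of the cubic matrix polynomial `P(z)·S(z) = T0 + T1 z + T2 z² + T3 z³`. -/
theorem left_invariant_pair_mul_linear {n ℓ : ℕ}
    (P0 P1 P2 S0 S1 : Matrix (Fin n) (Fin n) ℂ)
    (X : Matrix (Fin ℓ) (Fin ℓ) ℂ) (U : Matrix (Fin ℓ) (Fin n) ℂ)
    (heq : U * P0 + X * U * P1 + X ^ 2 * U * P2 = 0)
    (hrank : (Matrix.fromCols U (X * U)).rank = ℓ)
    (T0 T1 T2 T3 : Matrix (Fin n) (Fin n) ℂ)
    (hT0 : T0 = P0 * S0) (hT1 : T1 = P0 * S1 + P1 * S0)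
    (hT2 : T2 = P1 * S1 + P2 * S0) (hT3 : T3 = P2 * S1) :
    U * T0 + X * U * T1 + X ^ 2 * U * T2 + X ^ 3 * U * T3 = 0 ∧
      (Matrix.fromCols U (Matrix.fromCols (X * U) (X ^ 2 * U))).rank = ℓ := by
  subst hT0 hT1 hT2 hT3
  refine ⟨?_, le_antisymm ((rank_le_card_height _).trans_eq (Fintype.card_fin ℓ)) ?_⟩
  · rw [quadratic_left_eval_mul_linear, heq]
    simp
  · exact hrank.symm.trans_le (rank_fromCols_le_rank_fromCols_fromCols U (X * U) (X ^ 2 * U))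
end

section
/- Let M ∈ ℝ^{n×n} be partitioned in 2×2 block form M = [[M11, M12],[M21, M22]] with square diagonal blocks, and let v = [v1; v2] and w = [w1; w2] be column vectors partitioned conformably with M·v = w. Suppose M22 is invertible. Then: (i) M22·v2 = w2 − M21·v1; (ii) S·v1 = w1 − M12·M22⁻¹·w2, where S = M11 − M12·M22⁻¹·M21 is the Schur complement of M22 in M. If moreover all off-diagonal entries of M are ≤ 0 (so in particular M12 ≤ 0 and M21 ≤ 0 entrywise), v > 0 entrywise, w ≥ 0 entrywise, and M22⁻¹ ≥ 0 entrywise, then w2 − M21·v1 ≥ 0, w1 − M12·M22⁻¹·w2 ≥ 0, and all off-diagonal entries of S are ≤ 0. -/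
open Matrix

/-- Triplet representations for a principal submatrix and a Schur complement.
For a block matrix `M = [[M11, M12], [M21, M22]]` with `M·v = w`, `v = [v1; v2]`,
`w = [w1; w2]`, and `M22` invertible:
(i) `M22·v2 = w2 − M21·v1`;
(ii) `S·v1 = w1 − M12·M22⁻¹·w2` with `S = M11 − M12·M22⁻¹·M21`;
and, under the sign hypotheses, the new right hand sides are nonnegative and the
off-diagonal entries of `S` are nonpositive. -/
theorem schur_triplet_representation {p q : ℕ}
    (M11 : Matrix (Fin p) (Fin p) ℝ) (M12 : Matrix (Fin p) (Fin q) ℝ)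
    (M21 : Matrix (Fin q) (Fin p) ℝ) (M22 : Matrix (Fin q) (Fin q) ℝ)
    (M : Matrix (Fin p ⊕ Fin q) (Fin p ⊕ Fin q) ℝ)
    (hM : M = Matrix.fromBlocks M11 M12 M21 M22)
    (v1 w1 : Fin p → ℝ) (v2 w2 : Fin q → ℝ)
    (hMv : M.mulVec (Sum.elim v1 v2) = Sum.elim w1 w2)
    (hM22 : IsUnit M22.det) :
    (M22.mulVec v2 = w2 - M21.mulVec v1) ∧
    ((M11 - M12 * M22⁻¹ * M21).mulVec v1 = w1 - (M12 * M22⁻¹).mulVec w2) ∧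
    ((∀ i j : Fin p ⊕ Fin q, i ≠ j → M i j ≤ 0) → (∀ i, 0 < Sum.elim v1 v2 i) →
      (∀ i, 0 ≤ Sum.elim w1 w2 i) → (∀ i j, 0 ≤ M22⁻¹ i j) →
      (∀ i, 0 ≤ (w2 - M21.mulVec v1) i) ∧
      (∀ i, 0 ≤ (w1 - (M12 * M22⁻¹).mulVec w2) i) ∧
      (∀ i j : Fin p, i ≠ j → (M11 - M12 * M22⁻¹ * M21) i j ≤ 0)) := by
  subst hM
  rw [fromBlocks_mulVec] at hMv
  have hw1 : M11.mulVec v1 + M12.mulVec v2 = w1 :=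
    funext fun i => congrFun hMv (Sum.inl i)
  have hw2 : M21.mulVec v1 + M22.mulVec v2 = w2 :=
    funext fun i => congrFun hMv (Sum.inr i)
  have h1 : M22.mulVec v2 = w2 - M21.mulVec v1 := eq_sub_of_add_eq' hw2
  have key : (M12 * M22⁻¹).mulVec (M22.mulVec v2) = M12.mulVec v2 := by
    rw [mulVec_mulVec, Matrix.mul_assoc, nonsing_inv_mul _ hM22, Matrix.mul_one]
  have h2 : (M11 - M12 * M22⁻¹ * M21).mulVec v1 = w1 - (M12 * M22⁻¹).mulVec w2 := by
    rw [← hw1, ← hw2, mulVec_add, sub_mulVec, key, ← mulVec_mulVec]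
    abel
  refine ⟨h1, h2, fun hoff hv hw hMinv => ?_⟩
  have hM21 : ∀ i j, M21 i j ≤ 0 := fun i j => by
    simpa using hoff (Sum.inr i) (Sum.inl j) (by simp)
  have hM12 : ∀ i j, M12 i j ≤ 0 := fun i j => by
    simpa using hoff (Sum.inl i) (Sum.inr j) (by simp)
  have hM11 : ∀ i j : Fin p, i ≠ j → M11 i j ≤ 0 := fun i j hij => by
    simpa using hoff (Sum.inl i) (Sum.inl j) (by simpa using hij)
  have hprod : ∀ i k, (M12 * M22⁻¹) i k ≤ 0 := fun i k => by
    rw [Matrix.mul_apply]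
    exact Finset.sum_nonpos fun j _ =>
      mul_nonpos_of_nonpos_of_nonneg (hM12 i j) (hMinv j k)
  refine ⟨fun i => ?_, fun i => ?_, fun i j hij => ?_⟩
  · have hs : ∑ j, M21 i j * v1 j ≤ 0 :=
      Finset.sum_nonpos fun j _ =>
        mul_nonpos_of_nonpos_of_nonneg (hM21 i j) (hv (Sum.inl j)).le
    have hwi : 0 ≤ w2 i := hw (Sum.inr i)
    simp only [Pi.sub_apply, mulVec, dotProduct]
    linarith
  · have hs : ∑ k, (M12 * M22⁻¹) i k * w2 k ≤ 0 :=
      Finset.sum_nonpos fun k _ =>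
        mul_nonpos_of_nonpos_of_nonneg (hprod i k) (hw (Sum.inr k))
    have hwi : 0 ≤ w1 i := hw (Sum.inl i)
    simp only [Pi.sub_apply, mulVec, dotProduct]
    linarith
  · have hs : 0 ≤ (M12 * M22⁻¹ * M21) i j := by
      rw [Matrix.mul_apply]
      exact Finset.sum_nonneg fun k _ =>
        by nlinarith [hprod i k, hM21 k j]
    have := hM11 i j hij
    simp only [Matrix.sub_apply]
    linarith
end

section
/- Let A, B, C ∈ ℝ^{n×n} satisfy: A ≥ 0 and C ≥ 0 entrywise; B is an M-matrix, i.e., B = s·I − P for some s ≥ 0 and some entrywise nonnegative P every complex eigenvalue of which has modulus at most s; (A − B + C)·1 = 0 where 1 is the all-ones column vector; and the directed graph on (Fin n) × ℤ with an edge from (i,ℓ) to (j,ℓ+1) iff C_{ij} ≠ 0, from (i,ℓ) to (j,ℓ) iff i ≠ j and B_{ij} ≠ 0, and from (i,ℓ) to (j,ℓ−1) iff A_{ij} ≠ 0, is irreducible (every vertex is reachable from every vertex by a directed walk of positive length) and aperiodic (some vertex admits two closed directed walks of coprime positive lengths). Then there exist: a matrix G ∈ ℝ^{n×n} with A − B·G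 + C·G² = 0, G ≥ 0 entrywise and G·1 ≤ 1; and a matrix R ∈ ℝ^{n×n} with R²·A − R·B + C = 0, R ≥ 0 entrywise, and u·R ≤ u for every row vector u > 0 with u·(A − B + C) = 0. -/
open Matrix

/-- The edge relation of the directed graph of the nonzero off-diagonal entries of the
bi-infinite block tridiagonal matrix with blocks `(A, I - B, C)`. -/
def qbdEdge {n : ℕ} (A B C : Matrix (Fin n) (Fin n) ℝ) :
    (Fin n × ℤ) → (Fin n × ℤ) → Prop := fun x y =>
  (y.2 = x.2 + 1 ∧ C x.1 y.1 ≠ 0) ∨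
  (y.2 = x.2 ∧ x.1 ≠ y.1 ∧ B x.1 y.1 ≠ 0) ∨
  (y.2 = x.2 - 1 ∧ A x.1 y.1 ≠ 0)

/-- There is a directed walk of length `k` from `x` to `y` for the edge relation `E`. -/
def hasWalk {α : Type*} (E : α → α → Prop) (x y : α) (k : ℕ) : Prop :=
  ∃ f : ℕ → α, f 0 = x ∧ f k = y ∧ ∀ i < k, E (f i) (f (i + 1))

/-- The edge relation `E` is irreducible: every vertex is reachable from every vertex by a
directed walk of positive length. -/
def edgeIrreducible {α : Type*} (E : α → α → Prop) : Prop :=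
  ∀ x y, ∃ k, 0 < k ∧ hasWalk E x y k

/-- The edge relation `E` is aperiodic: some vertex admits two closed directed walks of
coprime positive lengths. -/
def edgeAperiodic {α : Type*} (E : α → α → Prop) : Prop :=
  ∃ x k₁ k₂, 0 < k₁ ∧ 0 < k₂ ∧ Nat.Coprime k₁ k₂ ∧ hasWalk E x x k₁ ∧ hasWalk E x x k₂

/-- `B` is an M-matrix: `B = s·I − P` with `s ≥ 0`, `P ≥ 0` entrywise, and every complex
eigenvalue of `P` of modulus at most `s`. -/
def IsMMatrix {n : ℕ} (B : Matrix (Fin n) (Fin n) ℝ) : Prop :=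
  ∃ (s : ℝ) (P : Matrix (Fin n) (Fin n) ℝ), 0 ≤ s ∧ (∀ i j, 0 ≤ P i j) ∧
    B = s • (1 : Matrix (Fin n) (Fin n) ℝ) - P ∧
    ∀ μ ∈ spectrum ℂ (P.map (fun x => (x : ℂ))), ‖μ‖ ≤ s

/-!
The block `B` is a Z-matrix whose row sums `(A + C) 1` are nonnegative, and irreducibility of the
level graph makes the minimum principle strict: `B x ≥ 0` forces `x ≥ 0`. Hence `B` is invertible
with `B⁻¹ ≥ 0`, and `X ↦ B⁻¹ (A + C X²)` is a continuous, entrywise monotone map. Iterating it from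
`0` gives an increasing sequence that stays in the closed set `{X ≥ 0 | X w ≤ w}` for every
nonnegative `w` with `(A - B + C) w = 0`; with one positive such `w` the set is bounded, so the
iterates converge to a fixed point, which solves `A - B X + C X² = 0`. For `G` take `w = 1`. For `R`
apply the same argument to the transposed equation with `w` ranging over the positive left null
vectors `u` of `A - B + C`; one such `u` exists by the Perron–Frobenius argument for the stochastic
matrix `1 + t (A - B + C)`, whose graph contains the projection of the level graph.
-/

open Filter Topology Function

namespace Matrix

variable {ι κ : Type*}

theorem tendsto_of_monotone_of_bddAbove {g : ℕ → Matrix κ ι ℝ}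
    (hmono : ∀ k i j, g k i j ≤ g (k + 1) i j)
    (hbdd : ∀ i j, BddAbove (Set.range fun k => g k i j)) :
    Tendsto g atTop (𝓝 (of fun i j => ⨆ k, g k i j)) :=
  tendsto_pi_nhds.2 fun i => tendsto_pi_nhds.2 fun j =>
    tendsto_atTop_ciSup (monotone_nat_of_le_succ fun k => hmono k i j) (hbdd i j)

theorem exists_isFixedPt_of_monotoneOn {F : Matrix κ ι ℝ → Matrix κ ι ℝ}
    {S : Set (Matrix κ ι ℝ)} (hF : Continuous F) (hS : IsClosed S) (hFS : Set.MapsTo F S S)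
    (hmono : ∀ X ∈ S, ∀ Y ∈ S, (∀ i j, X i j ≤ Y i j) → ∀ i j, F X i j ≤ F Y i j)
    (hbdd : ∀ i j, BddAbove ((fun X => X i j) '' S))
    {X₀ : Matrix κ ι ℝ} (hX₀ : X₀ ∈ S) (hX₀F : ∀ i j, X₀ i j ≤ F X₀ i j) :
    ∃ X ∈ S, IsFixedPt F X := by
  have hiter : ∀ k, F^[k] X₀ ∈ S := fun k => hFS.iterate k hX₀
  have hstep : ∀ k i j, F^[k] X₀ i j ≤ F^[k + 1] X₀ i j := by
    intro k
    induction k with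
    | zero => exact hX₀F
    | succ k ih =>
      rw [iterate_succ_apply', iterate_succ_apply' F (k + 1)]
      exact hmono _ (hiter k) _ (hiter (k + 1)) ih
  have hlim := tendsto_of_monotone_of_bddAbove hstep fun i j =>
    (hbdd i j).mono (Set.range_subset_iff.2 fun k => Set.mem_image_of_mem _ (hiter k))
  exact ⟨_, hS.mem_of_tendsto hlim (Eventually.of_forall hiter),
    isFixedPt_of_tendsto_iterate hlim hF.continuousAt⟩

variable [Fintype ι]

theorem mul_apply_le_mul_apply {X X' : Matrix κ ι ℝ} {Y Y' : Matrix ι κ ℝ}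
    (hX : ∀ i j, X i j ≤ X' i j) (hY : ∀ i j, Y i j ≤ Y' i j)
    (hY₀ : ∀ i j, 0 ≤ Y i j) (hX'₀ : ∀ i j, 0 ≤ X' i j) (i j : κ) :
    (X * Y) i j ≤ (X' * Y') i j :=
  Finset.sum_le_sum fun l _ => mul_le_mul (hX i l) (hY l j) (hY₀ l j) (hX'₀ i l)

theorem mul_apply_nonneg {X : Matrix κ ι ℝ} {Y : Matrix ι κ ℝ}
    (hX : ∀ i j, 0 ≤ X i j) (hY : ∀ i j, 0 ≤ Y i j) (i j : κ) : 0 ≤ (X * Y) i j :=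
  Finset.sum_nonneg fun l _ => mul_nonneg (hX i l) (hY l j)

theorem mulVec_le_mulVec_of_nonneg {M : Matrix κ ι ℝ} (hM : ∀ i j, 0 ≤ M i j)
    {x y : ι → ℝ} (h : x ≤ y) : M *ᵥ x ≤ M *ᵥ y := fun i =>
  Finset.sum_le_sum fun l _ => mul_le_mul_of_nonneg_left (h l) (hM i l)

def IsMonotone (B : Matrix ι ι ℝ) : Prop := ∀ x : ι → ℝ, 0 ≤ B *ᵥ x → 0 ≤ x

theorem isMonotone_of_forall_exists_escape {B : Matrix ι ι ℝ}
    (hoff : ∀ i j, i ≠ j → B i j ≤ 0) (hrow : 0 ≤ B *ᵥ 1)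
    (hesc : ∀ S : Set ι, S.Nonempty → ∃ i ∈ S, 0 < (B *ᵥ 1) i ∨ ∃ j ∉ S, B i j ≠ 0) :
    B.IsMonotone := by
  intro x hx
  by_contra hneg
  obtain ⟨i₁, hi₁⟩ : ∃ i, x i < 0 := by simpa [Pi.le_def] using hneg
  obtain ⟨i₀, -, hmin⟩ := Finset.univ.exists_min_image x ⟨i₁, Finset.mem_univ _⟩
  set m := x i₀
  have hm : m < 0 := (hmin i₁ (Finset.mem_univ _)).trans_lt hi₁
  obtain ⟨i, hi, hesc⟩ := hesc {j | x j = m} ⟨i₀, rfl⟩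
  have hsplit : (B *ᵥ x) i = ∑ j, B i j * (x j - m) + m * (B *ᵥ 1) i := by
    simp [mulVec, dotProduct, mul_sub, Finset.sum_sub_distrib, Finset.mul_sum, mul_comm]
  have hterm : ∀ j, B i j * (x j - m) ≤ 0 := by
    intro j
    rcases eq_or_ne i j with rfl | hij
    · simp [show x i = m from hi]
    · exact mul_nonpos_of_nonpos_of_nonneg (hoff i j hij)
        (sub_nonneg.2 (hmin j (Finset.mem_univ _)))
  have hnonpos : ∑ j, B i j * (x j - m) ≤ 0 := Finset.sum_nonpos fun j _ => hterm j
  have hlt : (B *ᵥ x) i < 0 := by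
    rcases hesc with hpos | ⟨j, hj, hBij⟩
    · nlinarith
    · have hj' : B i j * (x j - m) < 0 :=
        mul_neg_of_neg_of_pos ((hoff i j (ne_of_mem_of_not_mem hi hj)).lt_of_ne hBij)
          (sub_pos.2 ((hmin j (Finset.mem_univ _)).lt_of_ne' hj))
      have : ∑ j, B i j * (x j - m) < 0 := by
        simpa using Finset.sum_lt_sum (fun j _ => hterm j) ⟨j, Finset.mem_univ _, hj'⟩
      nlinarith [mul_nonpos_of_nonpos_of_nonneg hm.le (hrow i)]
  exact (hx i).not_gt hlt

variable [DecidableEq ι]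

theorem IsMonotone.isUnit_det {B : Matrix ι ι ℝ} (hB : B.IsMonotone) : IsUnit B.det := by
  refine isUnit_iff_ne_zero.2 fun h => ?_
  obtain ⟨x, hx, hBx⟩ := exists_mulVec_eq_zero_iff.2 h
  have hpos := hB x (by simp [hBx])
  have hneg := hB (-x) (by simp [mulVec_neg, hBx])
  exact hx (le_antisymm (fun i => by simpa using hneg i) hpos)

theorem IsMonotone.inv_nonneg {B : Matrix ι ι ℝ} (hB : B.IsMonotone) (i j : ι) :
    0 ≤ B⁻¹ i j := by
  have hcol : B *ᵥ (fun k => B⁻¹ k j) = Pi.single j 1 := by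
    ext i'
    simp [mulVec, dotProduct, ← mul_apply, mul_nonsing_inv B hB.isUnit_det, one_apply,
      Pi.single_apply, eq_comm]
  exact hB _ (hcol ▸ Pi.single_nonneg.2 zero_le_one) i

theorem exists_nonneg_quadratic_root {A B C : Matrix ι ι ℝ} (hA : ∀ i j, 0 ≤ A i j)
    (hC : ∀ i j, 0 ≤ C i j) (hB : IsUnit B.det) (hBinv : ∀ i j, 0 ≤ B⁻¹ i j)
    (W : Set (ι → ℝ)) (hW : ∀ w ∈ W, 0 ≤ w ∧ (A - B + C) *ᵥ w = 0)
    (hWpos : ∃ w ∈ W, ∀ i, 0 < w i) :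
    ∃ G : Matrix ι ι ℝ, A - B * G + C * G ^ 2 = 0 ∧ (∀ i j, 0 ≤ G i j) ∧
      ∀ w ∈ W, G *ᵥ w ≤ w := by
  set F : Matrix ι ι ℝ → Matrix ι ι ℝ := fun X => B⁻¹ * (A + C * X * X)
  set S : Set (Matrix ι ι ℝ) := {X | (∀ i j, 0 ≤ X i j) ∧ ∀ w ∈ W, X *ᵥ w ≤ w}
  have hF : Continuous F := by fun_prop
  have hS : IsClosed S := by
    simp only [S, Set.ofPred_and, Set.ofPred_forall]
    exact (isClosed_iInter fun i => isClosed_iInter fun j =>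
      isClosed_le continuous_const (continuous_id.matrix_elem i j)).inter
      (isClosed_biInter fun w _ => isClosed_le (continuous_id.matrix_mulVec continuous_const)
        continuous_const)
  have h₀ : (0 : Matrix ι ι ℝ) ∈ S := ⟨fun _ _ => le_rfl, fun w hw => by simpa using (hW w hw).1⟩
  have hFS : Set.MapsTo F S S := by
    rintro X ⟨hX, hXW⟩
    refine ⟨mul_apply_nonneg hBinv fun i j =>
      add_nonneg (hA i j) (mul_apply_nonneg (mul_apply_nonneg hC hX) hX i j), fun w hw => ?_⟩
    have hBw : A *ᵥ w + C *ᵥ w = B *ᵥ w := by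
      have := (hW w hw).2
      rw [add_mulVec, sub_mulVec] at this
      linear_combination this
    have hXXw : X *ᵥ (X *ᵥ w) ≤ w :=
      (mulVec_le_mulVec_of_nonneg hX (hXW w hw)).trans (hXW w hw)
    calc F X *ᵥ w = B⁻¹ *ᵥ (A *ᵥ w + C *ᵥ (X *ᵥ (X *ᵥ w))) := by
          simp only [F, ← mulVec_mulVec, add_mulVec]
      _ ≤ B⁻¹ *ᵥ (A *ᵥ w + C *ᵥ w) := mulVec_le_mulVec_of_nonneg hBinv
          (add_le_add_right (mulVec_le_mulVec_of_nonneg hC hXXw) _)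
      _ = w := by rw [hBw, mulVec_mulVec, nonsing_inv_mul _ hB, one_mulVec]
  have hmono : ∀ X ∈ S, ∀ Y ∈ S, (∀ i j, X i j ≤ Y i j) → ∀ i j, F X i j ≤ F Y i j := by
    rintro X ⟨hX, -⟩ Y ⟨hY, -⟩ hXY
    have hCY : ∀ i j, 0 ≤ (C * Y) i j := mul_apply_nonneg hC hY
    have hCXX : ∀ i j, (C * X * X) i j ≤ (C * Y * Y) i j :=
      mul_apply_le_mul_apply (mul_apply_le_mul_apply (fun _ _ => le_rfl) hXY hX hC) hXY hX hCY
    exact mul_apply_le_mul_apply (fun _ _ => le_rfl) (fun i j => add_le_add_right (hCXX i j) _)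
      (fun i j => add_nonneg (hA i j) (mul_apply_nonneg (mul_apply_nonneg hC hX) hX i j)) hBinv
  have hbdd : ∀ i j, BddAbove ((fun X => X i j) '' S) := by
    obtain ⟨w, hw, hwpos⟩ := hWpos
    refine fun i j => ⟨w i / w j, ?_⟩
    rintro _ ⟨X, ⟨hX, hXW⟩, rfl⟩
    rw [le_div_iff₀ (hwpos j)]
    exact (Finset.single_le_sum (f := fun l => X i l * w l)
      (fun l _ => mul_nonneg (hX i l) (hwpos l).le) (Finset.mem_univ j)).trans (hXW w hw i)
  obtain ⟨G, ⟨hG, hGW⟩, hGF⟩ :=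
    exists_isFixedPt_of_monotoneOn hF hS hFS hmono hbdd h₀ (hFS h₀).1
  have hBG : B * G = A + C * G * G := by
    conv_lhs => rw [← hGF.eq]
    rw [← mul_assoc, mul_nonsing_inv _ hB, one_mul]
  refine ⟨G, ?_, hG, hGW⟩
  rw [hBG, sq, ← mul_assoc]
  abel

-- `Rᵀ` solves the equation with `A` and `C` exchanged and all blocks transposed.
theorem exists_nonneg_left_quadratic_root {A B C : Matrix ι ι ℝ} (hA : ∀ i j, 0 ≤ A i j)
    (hC : ∀ i j, 0 ≤ C i j) (hB : IsUnit B.det) (hBinv : ∀ i j, 0 ≤ B⁻¹ i j)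
    (U : Set (ι → ℝ)) (hU : ∀ u ∈ U, 0 ≤ u ∧ u ᵥ* (A - B + C) = 0)
    (hUpos : ∃ u ∈ U, ∀ i, 0 < u i) :
    ∃ R : Matrix ι ι ℝ, R ^ 2 * A - R * B + C = 0 ∧ (∀ i j, 0 ≤ R i j) ∧
      ∀ u ∈ U, u ᵥ* R ≤ u := by
  obtain ⟨Rt, hRt, hRt₀, hRtU⟩ := exists_nonneg_quadratic_root (A := Cᵀ) (B := Bᵀ) (C := Aᵀ)
    (fun i j => hC j i) (fun i j => hA j i) (by simpa using hB)
    (by simpa [← transpose_nonsing_inv] using fun i j => hBinv j i) U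
    (fun u hu => ⟨(hU u hu).1, by
      rw [← (hU u hu).2, ← mulVec_transpose, transpose_add, transpose_sub, sub_add_comm]⟩)
    hUpos
  refine ⟨Rtᵀ, ?_, fun i j => hRt₀ j i, fun u hu => by simpa [vecMul_transpose] using hRtU u hu⟩
  have := congrArg transpose hRt
  simp only [transpose_add, transpose_sub, transpose_mul, transpose_pow, transpose_transpose,
    transpose_zero] at this
  rw [← this]
  abel

variable {M : Matrix ι ι ℝ}

theorem exists_nonneg_vecMul_eq_self_of_mem_rowStochastic [Nonempty ι]
    (hM : M ∈ rowStochastic ℝ ι) : ∃ v : ι → ℝ, 0 ≤ v ∧ v ≠ 0 ∧ v ᵥ* M = v := by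
  have hdet : (M - 1).det = 0 :=
    exists_mulVec_eq_zero_iff.1 ⟨1, one_ne_zero, by simp [sub_mulVec, hM.2]⟩
  obtain ⟨w, hw, hwM⟩ := exists_vecMul_eq_zero_iff.2 hdet
  rw [vecMul_sub, vecMul_one, sub_eq_zero] at hwM
  set v : ι → ℝ := fun i => |w i|
  -- the triangle inequality makes `v` subinvariant, and `M` preserves the total mass
  have hle : ∀ j, v j ≤ (v ᵥ* M) j := fun j => calc
    v j = |(w ᵥ* M) j| := by simp only [v, hwM]
    _ ≤ ∑ i, |w i * M i j| := Finset.abs_sum_le_sum_abs _ _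
    _ = (v ᵥ* M) j := by simp [vecMul, dotProduct, abs_mul, abs_of_nonneg (hM.1 _ _), v]
  have hmass : ∑ j, (v ᵥ* M) j = ∑ j, v j := by
    rw [← dotProduct_one, ← dotProduct_one, ← dotProduct_mulVec, hM.2]
  refine ⟨v, fun i => abs_nonneg _, fun hv => hw (funext fun i => ?_), funext fun j => ?_⟩
  · simpa [v] using congrFun hv i
  · exact ((Finset.sum_eq_sum_iff_of_le fun j _ => hle j).1 hmass.symm j
      (Finset.mem_univ _)).symm

theorem IsIrreducible.pos_of_vecMul_eq_self (hM : M.IsIrreducible) {v : ι → ℝ} (hv : 0 ≤ v)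
    (hv₀ : v ≠ 0) (hvM : v ᵥ* M = v) (j : ι) : 0 < v j := by
  obtain ⟨i, hi⟩ := Function.ne_iff.1 hv₀
  have hvMk : ∀ k, v ᵥ* M ^ k = v := by
    intro k
    induction k with
    | zero => simp
    | succ k ih => rw [pow_succ, ← vecMul_vecMul, ih, hvM]
  obtain ⟨k, -, hk⟩ := (isIrreducible_iff_exists_pow_pos hM.nonneg).1 hM i j
  calc 0 < v i * (M ^ k) i j := mul_pos ((hv i).lt_of_ne' hi) hk
    _ ≤ ∑ l, v l * (M ^ k) l j :=
      Finset.single_le_sum (f := fun l => v l * (M ^ k) l j)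
        (fun l _ => mul_nonneg (hv l) (pow_apply_nonneg hM.nonneg k l j)) (Finset.mem_univ i)
    _ = v j := by rw [← congrFun (hvMk k) j]; rfl

theorem exists_pos_vecMul_eq_self_of_isIrreducible (hM : M ∈ rowStochastic ℝ ι)
    (hirr : M.IsIrreducible) : ∃ v : ι → ℝ, (∀ i, 0 < v i) ∧ v ᵥ* M = v := by
  cases isEmpty_or_nonempty ι
  · exact ⟨0, isEmptyElim, Subsingleton.elim _ _⟩
  obtain ⟨v, hv, hv₀, hvM⟩ := exists_nonneg_vecMul_eq_self_of_mem_rowStochastic hM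
  exact ⟨v, hirr.pos_of_vecMul_eq_self hv hv₀ hvM, hvM⟩

theorem exists_one_add_smul_mem_rowStochastic {Q : Matrix ι ι ℝ}
    (hQ : ∀ i j, i ≠ j → 0 ≤ Q i j) (hQ₁ : Q *ᵥ 1 = 0) :
    ∃ t : ℝ, 0 < t ∧ 1 + t • Q ∈ rowStochastic ℝ ι ∧ ∀ i, 0 < (1 + t • Q) i i := by
  set c := ∑ i, |Q i i|
  have hc : 0 ≤ c := Finset.sum_nonneg fun i _ => abs_nonneg _
  have ht : 0 < (1 + c)⁻¹ := by positivity
  have hdiag : ∀ i, 0 < (1 + (1 + c)⁻¹ • Q) i i := by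
    intro i
    have hQi : |Q i i| ≤ c := Finset.single_le_sum (f := fun i => |Q i i|)
      (fun i _ => abs_nonneg _) (Finset.mem_univ i)
    have : (1 + c)⁻¹ * |Q i i| < 1 := by
      rw [inv_mul_lt_one₀ (by positivity)]; linarith
    simp only [add_apply, one_apply_eq, smul_apply, smul_eq_mul]
    nlinarith [neg_abs_le (Q i i)]
  refine ⟨(1 + c)⁻¹, ht, ⟨fun i j => ?_, ?_⟩, hdiag⟩
  · rcases eq_or_ne i j with rfl | hij
    · exact (hdiag i).le
    · simpa [one_apply_ne hij] using mul_nonneg ht.le (hQ i j hij)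
  · simp [add_mulVec, smul_mulVec, hQ₁]

end Matrix

section Walks

variable {α ι : Type*} [Fintype ι] [DecidableEq ι] {E : α → α → Prop} {M : Matrix ι ι ℝ}

theorem hasWalk.pow_apply_pos (π : α → ι) (hM : ∀ i j, 0 ≤ M i j)
    (hE : ∀ x y, E x y → 0 < M (π x) (π y)) {x y : α} {k : ℕ} (h : hasWalk E x y k) :
    0 < (M ^ k) (π x) (π y) := by
  induction k generalizing y with
  | zero =>
    obtain ⟨f, rfl, rfl, -⟩ := h
    simp
  | succ k ih =>
    obtain ⟨f, rfl, rfl, hf⟩ := h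
    have hprev := ih ⟨f, rfl, rfl, fun i hi => hf i (hi.trans k.lt_succ_self)⟩
    rw [pow_succ, Matrix.mul_apply]
    exact (mul_pos hprev (hE _ _ (hf k k.lt_succ_self))).trans_le
      (Finset.single_le_sum (f := fun l => (M ^ k) (π (f 0)) l * M l (π (f (k + 1))))
        (fun l _ => mul_nonneg (Matrix.pow_apply_nonneg hM k _ l) (hM l _))
        (Finset.mem_univ _))

theorem edgeIrreducible.isIrreducible (hirr : edgeIrreducible E) {π : α → ι}
    (hπ : Function.Surjective π) (hM : ∀ i j, 0 ≤ M i j)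
    (hE : ∀ x y, E x y → 0 < M (π x) (π y)) : M.IsIrreducible := by
  refine (Matrix.isIrreducible_iff_exists_pow_pos hM).2 fun i j => ?_
  obtain ⟨x, rfl⟩ := hπ i
  obtain ⟨y, rfl⟩ := hπ j
  obtain ⟨k, hk, hw⟩ := hirr x y
  exact ⟨k, hk, hw.pow_apply_pos π hM hE⟩

end Walks

section QBD

variable {n : ℕ} {A B C : Matrix (Fin n) (Fin n) ℝ}

theorem IsMMatrix.apply_nonpos_of_ne (hB : IsMMatrix B) {i j : Fin n} (hij : i ≠ j) :
    B i j ≤ 0 := by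
  obtain ⟨s, P, -, hP, rfl, -⟩ := hB
  simp [one_apply_ne hij, hP i j]

theorem qbdEdge.generator_pos (hA : ∀ i j, 0 ≤ A i j) (hC : ∀ i j, 0 ≤ C i j)
    (hB : IsMMatrix B) {x y : Fin n × ℤ} (h : qbdEdge A B C x y) (hxy : x.1 ≠ y.1) :
    0 < (A - B + C) x.1 y.1 := by
  have hA' := hA x.1 y.1
  have hB' := hB.apply_nonpos_of_ne hxy
  have hC' := hC x.1 y.1
  simp only [Matrix.add_apply, Matrix.sub_apply]
  rcases h with ⟨-, h⟩ | ⟨-, -, h⟩ | ⟨-, h⟩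
  · linarith [hC'.lt_of_ne' h]
  · linarith [hB'.lt_of_ne h]
  · linarith [hA'.lt_of_ne' h]

theorem edgeIrreducible.exists_escape (hirr : edgeIrreducible (qbdEdge A B C))
    {S : Set (Fin n)} (hS : S.Nonempty) :
    ∃ i ∈ S, (∃ j, A i j ≠ 0 ∨ C i j ≠ 0) ∨ ∃ j ∉ S, B i j ≠ 0 := by
  by_contra! htrap
  obtain ⟨i₀, hi₀⟩ := hS
  obtain ⟨k, -, f, hf₀, hfk, hf⟩ := hirr (i₀, 0) (i₀, 1)
  have hstay : ∀ m ≤ k, (f m).1 ∈ S ∧ (f m).2 = 0 := by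
    intro m hm
    induction m with
    | zero => simp [hf₀, hi₀]
    | succ m ih =>
      obtain ⟨hmS, hm₀⟩ := ih (by omega)
      obtain ⟨hAC, hB⟩ := htrap _ hmS
      rcases hf m (by omega) with ⟨-, h⟩ | ⟨h, -, h'⟩ | ⟨-, h⟩
      · exact absurd (hAC _).2 h
      · exact ⟨not_not.1 fun hS => h' (hB _ hS), h.trans hm₀⟩
      · exact absurd (hAC _).1 h
  simpa [hfk] using (hstay k le_rfl).2

theorem isMonotone_of_qbd (hA : ∀ i j, 0 ≤ A i j) (hC : ∀ i j, 0 ≤ C i j) (hB : IsMMatrix B)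
    (hsum : (A - B + C) *ᵥ 1 = 0) (hirr : edgeIrreducible (qbdEdge A B C)) :
    B.IsMonotone := by
  have hrow : ∀ i, (B *ᵥ 1) i = ∑ j, (A i j + C i j) := by
    rw [add_mulVec, sub_mulVec, sub_add_eq_add_sub, sub_eq_zero] at hsum
    intro i
    rw [← hsum]
    simp [mulVec, dotProduct, Finset.sum_add_distrib]
  refine isMonotone_of_forall_exists_escape (fun i j => hB.apply_nonpos_of_ne)
    (fun i => (hrow i).symm ▸ Finset.sum_nonneg fun j _ => add_nonneg (hA i j) (hC i j))
    fun S hS => ?_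
  obtain ⟨i, hi, hesc⟩ := hirr.exists_escape hS
  refine ⟨i, hi, hesc.imp_left fun ⟨j, hj⟩ => (hrow i).symm ▸ Finset.sum_pos'
    (fun j _ => add_nonneg (hA i j) (hC i j)) ⟨j, Finset.mem_univ _, ?_⟩⟩
  rcases hj with hj | hj
  · exact add_pos_of_pos_of_nonneg ((hA i j).lt_of_ne' hj) (hC i j)
  · exact add_pos_of_nonneg_of_pos (hA i j) ((hC i j).lt_of_ne' hj)

theorem exists_pos_vecMul_eq_zero_of_qbd (hA : ∀ i j, 0 ≤ A i j) (hC : ∀ i j, 0 ≤ C i j)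
    (hB : IsMMatrix B) (hsum : (A - B + C) *ᵥ 1 = 0) (hirr : edgeIrreducible (qbdEdge A B C)) :
    ∃ u : Fin n → ℝ, (∀ i, 0 < u i) ∧ u ᵥ* (A - B + C) = 0 := by
  have hQ : ∀ i j, i ≠ j → 0 ≤ (A - B + C) i j := fun i j hij => by
    simp only [Matrix.add_apply, Matrix.sub_apply]
    linarith [hA i j, hC i j, hB.apply_nonpos_of_ne hij]
  -- uniformization of the generator `A - B + C`
  obtain ⟨t, ht, hM, hdiag⟩ := exists_one_add_smul_mem_rowStochastic hQ hsum
  have hirrM : (1 + t • (A - B + C)).IsIrreducible :=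
    hirr.isIrreducible Prod.fst_surjective hM.1 fun x y hxy => by
      rcases eq_or_ne x.1 y.1 with h | h
      · exact h ▸ hdiag x.1
      · rw [Matrix.add_apply, Matrix.smul_apply, one_apply_ne h, zero_add, smul_eq_mul]
        exact mul_pos ht (hxy.generator_pos hA hC hB h)
  obtain ⟨u, hu, huM⟩ := exists_pos_vecMul_eq_self_of_isIrreducible hM hirrM
  refine ⟨u, hu, ?_⟩
  rwa [vecMul_add, vecMul_one, vecMul_smul, add_eq_left, smul_eq_zero_iff_right ht.ne'] at huM

end QBD

theorem exists_G_and_R_general {n : ℕ} (A B C : Matrix (Fin n) (Fin n) ℝ)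
    (hA : ∀ i j, 0 ≤ A i j) (hC : ∀ i j, 0 ≤ C i j) (hB : IsMMatrix B)
    (hsum : (A - B + C).mulVec (fun _ => 1) = 0)
    (hirr : edgeIrreducible (qbdEdge A B C)) :
    (∃ G : Matrix (Fin n) (Fin n) ℝ, A - B * G + C * G ^ 2 = 0 ∧ (∀ i j, 0 ≤ G i j) ∧
      ∀ i, G.mulVec (fun _ => 1) i ≤ 1) ∧
    (∃ R : Matrix (Fin n) (Fin n) ℝ, R ^ 2 * A - R * B + C = 0 ∧ (∀ i j, 0 ≤ R i j) ∧
      ∀ u : Fin n → ℝ, (∀ i, 0 < u i) → Matrix.vecMul u (A - B + C) = 0 →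
        ∀ j, Matrix.vecMul u R j ≤ u j) := by
  replace hsum : (A - B + C) *ᵥ 1 = 0 := hsum
  have hBmono := isMonotone_of_qbd hA hC hB hsum hirr
  refine ⟨?_, ?_⟩
  · obtain ⟨G, hG, hG₀, hG₁⟩ := exists_nonneg_quadratic_root hA hC hBmono.isUnit_det
      hBmono.inv_nonneg {1} (by simpa using hsum) ⟨1, rfl, fun _ => one_pos⟩
    exact ⟨G, hG, hG₀, hG₁ 1 rfl⟩
  · obtain ⟨u₀, hu₀, hu₀Q⟩ := exists_pos_vecMul_eq_zero_of_qbd hA hC hB hsum hirr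
    obtain ⟨R, hR, hR₀, hRU⟩ := exists_nonneg_left_quadratic_root hA hC hBmono.isUnit_det
      hBmono.inv_nonneg {u | (∀ i, 0 < u i) ∧ u ᵥ* (A - B + C) = 0}
      (fun u hu => ⟨fun i => (hu.1 i).le, hu.2⟩) ⟨u₀, ⟨hu₀, hu₀Q⟩, hu₀⟩
    exact ⟨R, hR, hR₀, fun u hu huQ => hRU u ⟨hu, huQ⟩⟩

/-- Existence of the minimal nonnegative solutions `G` and `R` of the quadratic matrix
equations associated with a QBD process satisfying Assumptions A4, A5, A6. -/
theorem exists_G_and_R {n : ℕ} (A B C : Matrix (Fin n) (Fin n) ℝ)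
    (hA : ∀ i j, 0 ≤ A i j) (hC : ∀ i j, 0 ≤ C i j) (hB : IsMMatrix B)
    (hsum : (A - B + C).mulVec (fun _ => 1) = 0)
    (hirr : edgeIrreducible (qbdEdge A B C))
    (haper : edgeAperiodic (qbdEdge A B C)) :
    (∃ G : Matrix (Fin n) (Fin n) ℝ, A - B * G + C * G ^ 2 = 0 ∧ (∀ i j, 0 ≤ G i j) ∧
      ∀ i, G.mulVec (fun _ => 1) i ≤ 1) ∧
    (∃ R : Matrix (Fin n) (Fin n) ℝ, R ^ 2 * A - R * B + C = 0 ∧ (∀ i j, 0 ≤ R i j) ∧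
      ∀ u : Fin n → ℝ, (∀ i, 0 < u i) → Matrix.vecMul u (A - B + C) = 0 →
        ∀ j, Matrix.vecMul u R j ≤ u j) :=
  exists_G_and_R_general A B C hA hC hB hsum hirr
end

section
/- Let A, B, C ∈ ℝ^{n×n} with B invertible and (A − B + C)·1 = 0, where 1 is the all-ones column vector. Define the Cyclic Reduction step A' = A·B⁻¹·A, B' = B − A·B⁻¹·C − C·B⁻¹·A, C' = C·B⁻¹·C. Then (A' − B' + C')·1 = 0. -/
open Matrix

/-- One step of Cyclic Reduction preserves the identity `(A − B + C)·1 = 0`. -/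
theorem cr_step_preserves_row_sums {n : ℕ} (A B C : Matrix (Fin n) (Fin n) ℝ)
    (hB : IsUnit B.det)
    (h : (A - B + C).mulVec (fun _ => 1) = 0) :
    (A * B⁻¹ * A - (B - A * B⁻¹ * C - C * B⁻¹ * A) + C * B⁻¹ * C).mulVec (fun _ => 1) = 0 := by
  have h' : A.mulVec (fun _ => 1) - B.mulVec (fun _ => 1) + C.mulVec (fun _ => 1) = 0 := by
    simpa [sub_mulVec, add_mulVec] using h
  have key : (A + C).mulVec (fun _ => 1) = B.mulVec (fun _ => 1) := by
    rw [add_mulVec]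
    linear_combination h'
  have rw1 : A * B⁻¹ * A - (B - A * B⁻¹ * C - C * B⁻¹ * A) + C * B⁻¹ * C
      = (A + C) * B⁻¹ * (A + C) - B := by
    noncomm_ring
  have hBinv : B⁻¹.mulVec (B.mulVec (fun _ => 1)) = (fun _ => 1) := by
    rw [mulVec_mulVec, Matrix.nonsing_inv_mul B hB, one_mulVec]
  rw [rw1, sub_mulVec, ← mulVec_mulVec, ← mulVec_mulVec, key, hBinv, key, sub_self]
end

section
/- Let A0, A, B, C, B̂ ∈ ℝ^{n×n} with B invertible, (A − B + C)·1 = 0 and (A0 − B̂ + C)·1 = 0, where 1 is the all-ones column vector. Define C' = C·B⁻¹·C and B̂' = B̂ − C·B⁻¹·A. Then (A0 − B̂' + C')·1 = 0. -/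
open Matrix

/-- The inductive step showing that the identity `(A0 − B̂_k + C_k)·1 = 0` is preserved along
the Cyclic Reduction iteration. -/
theorem cr_step_preserves_hat_row_sums {n : ℕ} (A0 A B C Bhat : Matrix (Fin n) (Fin n) ℝ)
    (hB : IsUnit B.det)
    (h1 : (A - B + C).mulVec (fun _ => 1) = 0)
    (h2 : (A0 - Bhat + C).mulVec (fun _ => 1) = 0) :
    (A0 - (Bhat - C * B⁻¹ * A) + C * B⁻¹ * C).mulVec (fun _ => 1) = 0 := by
  have key : (A + C).mulVec (fun _ => 1) = B.mulVec (fun _ => 1) := by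
    have h1' : ((A + C) - B).mulVec (fun _ => 1) = 0 := by
      rw [show (A + C) - B = A - B + C by abel]; exact h1
    rw [sub_mulVec, sub_eq_zero] at h1'
    exact h1'
  have inv1 : (B⁻¹).mulVec ((A + C).mulVec (fun _ => 1)) = (fun _ => 1) := by
    rw [key, mulVec_mulVec, nonsing_inv_mul B hB, one_mulVec]
  have main : (C * B⁻¹ * (A + C)).mulVec (fun _ => 1) = C.mulVec (fun _ => 1) := by
    rw [Matrix.mul_assoc, ← mulVec_mulVec, ← mulVec_mulVec, inv1]
  calc (A0 - (Bhat - C * B⁻¹ * A) + C * B⁻¹ * C).mulVec (fun _ => 1)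
      = (A0 - Bhat).mulVec (fun _ => 1) + (C * B⁻¹ * (A + C)).mulVec (fun _ => 1) := by
        rw [show A0 - (Bhat - C * B⁻¹ * A) + C * B⁻¹ * C
            = (A0 - Bhat) + C * B⁻¹ * (A + C) by rw [mul_add]; abel, add_mulVec]
    _ = (A0 - Bhat + C).mulVec (fun _ => 1) := by rw [main, ← add_mulVec]
    _ = 0 := h2
end

section
/- Let A, B, C, B̂, C0 ∈ ℝ^{n×n} with B invertible, and let u ∈ ℝ^{1×n} be a row vector such that u·(A − B + C) = 0 and u·(A − B̂ + C0) = 0. Define A' = A·B⁻¹·A, B' = B − A·B⁻¹·C − C·B⁻¹·A, C' = C·B⁻¹·C and B̂' = B̂ − C·B⁻¹·A. Then u·(A' − B' + C') = 0 and u·(A' − B̂' + C0) = 0. -/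
open Matrix

/-- The inductive step showing that the left identities `u·(A_k − B_k + C_k) = 0` and
`u·(A_k − B̂_k + C0) = 0` are preserved along the Cyclic Reduction iteration. -/
theorem cr_step_preserves_left_identities {n : ℕ} (A B C Bhat C0 : Matrix (Fin n) (Fin n) ℝ)
    (hB : IsUnit B.det) (u : Fin n → ℝ)
    (h1 : Matrix.vecMul u (A - B + C) = 0)
    (h2 : Matrix.vecMul u (A - Bhat + C0) = 0) :
    Matrix.vecMul u (A * B⁻¹ * A - (B - A * B⁻¹ * C - C * B⁻¹ * A) + C * B⁻¹ * C) = 0 ∧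
      Matrix.vecMul u (A * B⁻¹ * A - (Bhat - C * B⁻¹ * A) + C0) = 0 := by
  have hBB : B * B⁻¹ = 1 := Matrix.mul_nonsing_inv B hB
  have key : Matrix.vecMul u (A + C) = Matrix.vecMul u B := by
    have h : A - B + C = (A + C) - B := by noncomm_ring
    rw [h, Matrix.vecMul_sub, sub_eq_zero] at h1
    exact h1
  have cancel : ∀ M : Matrix (Fin n) (Fin n) ℝ,
      Matrix.vecMul u ((A + C) * (B⁻¹ * M)) = Matrix.vecMul u M := by
    intro M
    rw [← Matrix.vecMul_vecMul, key, Matrix.vecMul_vecMul, ← mul_assoc, hBB, one_mul]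
  constructor
  · have e : A * B⁻¹ * A - (B - A * B⁻¹ * C - C * B⁻¹ * A) + C * B⁻¹ * C =
        (A + C) * (B⁻¹ * (A + C)) - B := by noncomm_ring
    rw [e, Matrix.vecMul_sub, cancel, key, sub_self]
  · have e : A * B⁻¹ * A - (Bhat - C * B⁻¹ * A) + C0 =
        (A + C) * (B⁻¹ * A) + (A - Bhat + C0) - A := by noncomm_ring
    rw [e, Matrix.vecMul_sub, Matrix.vecMul_add, cancel, h2, add_zero, sub_self]
end

section
/- Let (Z, U) with Z ∈ ℂ^{ℓ×ℓ}, U ∈ ℂ^{ℓ×n} be a left invariant pair of P(z) = P0 + P1·z + P2·z² (i.e., U·P0 + Z·U·P1 + Z²·U·P2 = 0 and [U, Z·U] has full row rank ℓ), let α, β, γ, δ ∈ ℂ with αδ − βγ ≠ 0, and suppose γ·Z + δ·I is invertible. Set Y = (α·Z + β·I)·(γ·Z + δ·I)⁻¹ and F0 = α²·P0 − αβ·P1 + β²·P2, F1 = −2αγ·P0 + (αδ + βγ)·P1 − 2βδ·P2, F2 = γ²·P0 − γδ·P1 + δ²·P2. Then U·F0 + Y·U·F1 + Y²·U·F2 =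 0 and [U, Y·U] has full row rank ℓ; i.e., (Y, U) is a left invariant pair of F(y) = F0 + F1·y + F2·y². -/
/-!
Put `A = αZ + βI` and `B = γZ + δI`. They commute, so `Y = AB⁻¹` commutes with `B`
and `BY = A`. Hence `B²(UF₀ + YUF₁ + Y²UF₂) = B²UF₀ + BAUF₁ + A²UF₂`, the homogenised
left evaluation of `F` at `(A : B)`, and expanding it gives
`(αδ - βγ)²(UP₀ + ZUP₁ + Z²UP₂) = 0`. For the rank,
`B[U, YU] = [BU, AU] = [U, ZU]·[[δI, βI], [γI, αI]]`, and both outer factors are invertible.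
-/

open Matrix

theorem commute_smul_add_smul_one {R A : Type*} [CommSemiring R] [Semiring A] [Algebra R A]
    (x : A) (α β γ δ : R) : Commute (α • x + β • 1) (γ • x + δ • 1) :=
  ((Commute.refl x).smul_left α |>.add_left ((Commute.one_left x).smul_left β)).smul_right γ
    |>.add_right ((Commute.one_right _).smul_right δ)

namespace Matrix

variable {R K : Type*} [CommRing R] [Field K] {l n : Type*} [Fintype l] [DecidableEq l]
  [Fintype n]

theorem commute_mul_nonsing_inv {A B : Matrix l l R} (h : Commute A B) (hB : IsUnit B.det) :
    Commute B (A * B⁻¹) :=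
  h.symm.mul_right <| (mul_nonsing_inv B hB).trans (nonsing_inv_mul B hB).symm

theorem mul_mul_nonsing_inv_of_commute {A B : Matrix l l R} (h : Commute A B)
    (hB : IsUnit B.det) : B * (A * B⁻¹) = A := by
  rw [← Matrix.mul_assoc, ← h.eq, mul_nonsing_inv_cancel_right _ _ hB]

def quadLeftEval (U : Matrix l n R) (P0 P1 P2 : Matrix n n R) (X : Matrix l l R) :
    Matrix l n R :=
  U * P0 + X * U * P1 + X ^ 2 * U * P2

def quadLeftEvalHomog (U : Matrix l n R) (P0 P1 P2 : Matrix n n R) (X W : Matrix l l R) :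
    Matrix l n R :=
  W ^ 2 * U * P0 + W * X * U * P1 + X ^ 2 * U * P2

theorem quadLeftEvalHomog_mul_left {W X : Matrix l l R} (h : Commute W X) (U : Matrix l n R)
    (P0 P1 P2 : Matrix n n R) :
    quadLeftEvalHomog U P0 P1 P2 (W * X) W = W ^ 2 * quadLeftEval U P0 P1 P2 X := by
  simp only [quadLeftEvalHomog, quadLeftEval, h.mul_pow, Matrix.mul_add, pow_two,
    Matrix.mul_assoc]

theorem quadLeftEvalHomog_moebius (U : Matrix l n R) (P0 P1 P2 : Matrix n n R)
    (X : Matrix l l R) (α β γ δ : R) :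
    quadLeftEvalHomog U (α ^ 2 • P0 - (α * β) • P1 + β ^ 2 • P2)
        ((-(2 * α * γ)) • P0 + (α * δ + β * γ) • P1 - (2 * β * δ) • P2)
        (γ ^ 2 • P0 - (γ * δ) • P1 + δ ^ 2 • P2) (α • X + β • 1) (γ • X + δ • 1) =
      (α * δ - β * γ) ^ 2 • quadLeftEval U P0 P1 P2 X := by
  simp only [quadLeftEvalHomog, quadLeftEval, Matrix.add_mul, Matrix.mul_add, Matrix.mul_sub,
    Matrix.smul_mul, Matrix.mul_smul, smul_smul, Matrix.mul_one, Matrix.one_mul, smul_add,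
    pow_two, Matrix.mul_assoc]
  module

variable [DecidableEq n]

theorem fromBlocks_smul_one_mul_fromBlocks_smul_one (a b c d : R) :
    (fromBlocks (a • 1) (b • 1) (c • 1) (d • 1) : Matrix (n ⊕ n) (n ⊕ n) R) *
        fromBlocks (d • 1) ((-b) • 1) ((-c) • 1) (a • 1) = (a * d - b * c) • 1 := by
  rw [fromBlocks_multiply, ← fromBlocks_one, fromBlocks_smul, smul_zero]
  congr 1 <;> simp only [smul_mul_smul_comm, Matrix.mul_one] <;> module

theorem isUnit_det_fromBlocks_smul_one {a b c d : K} (h : a * d - b * c ≠ 0) :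
    IsUnit (fromBlocks (a • 1) (b • 1) (c • 1) (d • 1) : Matrix (n ⊕ n) (n ⊕ n) K).det := by
  have hprod := congrArg det (fromBlocks_smul_one_mul_fromBlocks_smul_one (n := n) a b c d)
  rw [det_mul, det_smul, det_one, mul_one] at hprod
  exact isUnit_iff_ne_zero.mpr <| left_ne_zero_of_mul <| hprod ▸ pow_ne_zero _ h

theorem rank_fromCols_moebius {X Y : Matrix l l K} (U : Matrix l n K) {α β γ δ : K}
    (hdet : α * δ - β * γ ≠ 0) (hB : IsUnit (γ • X + δ • 1).det)
    (hY : (γ • X + δ • 1) * Y = α • X + β • 1) :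
    (fromCols U (Y * U)).rank = (fromCols U (X * U)).rank := by
  have hcols : (γ • X + δ • 1) * fromCols U (Y * U) =
      fromCols U (X * U) *
        (fromBlocks (δ • 1) (β • 1) (γ • 1) (α • 1) : Matrix (n ⊕ n) (n ⊕ n) K) := by
    rw [mul_fromCols, ← Matrix.mul_assoc, hY, Matrix.fromCols_mul_fromBlocks]
    simp only [Matrix.add_mul, Matrix.smul_mul, Matrix.mul_smul, Matrix.one_mul, Matrix.mul_one,
      add_comm]
  rw [← rank_mul_eq_right_of_isUnit_det _ _ hB, hcols,
    rank_mul_eq_left_of_isUnit_det _ _ (isUnit_det_fromBlocks_smul_one (by rwa [mul_comm δ]))]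

end Matrix

/-- A left invariant pair `(Z, U)` of `P(z) = P0 + P1 z + P2 z²` is transformed by a Möbius
map with `γZ + δI` invertible into a left invariant pair `(Y, U)`, `Y = (αZ + βI)(γZ + δI)⁻¹`,
of the transformed quadratic `F(y) = F0 + F1 y + F2 y²`. -/
theorem left_invariant_pair_moebius {n ℓ : ℕ}
    (P0 P1 P2 : Matrix (Fin n) (Fin n) ℂ)
    (Z : Matrix (Fin ℓ) (Fin ℓ) ℂ) (U : Matrix (Fin ℓ) (Fin n) ℂ)
    (heq : U * P0 + Z * U * P1 + Z ^ 2 * U * P2 = 0)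
    (hrank : (Matrix.fromCols U (Z * U)).rank = ℓ)
    (α β γ δ : ℂ) (hdet : α * δ - β * γ ≠ 0)
    (hZinv : IsUnit (γ • Z + δ • (1 : Matrix (Fin ℓ) (Fin ℓ) ℂ)).det)
    (Y : Matrix (Fin ℓ) (Fin ℓ) ℂ)
    (hY : Y = (α • Z + β • (1 : Matrix (Fin ℓ) (Fin ℓ) ℂ)) *
      (γ • Z + δ • (1 : Matrix (Fin ℓ) (Fin ℓ) ℂ))⁻¹)
    (F0 F1 F2 : Matrix (Fin n) (Fin n) ℂ)
    (hF0 : F0 = (α ^ 2) • P0 - (α * β) • P1 + (β ^ 2) • P2)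
    (hF1 : F1 = (-(2 * α * γ)) • P0 + (α * δ + β * γ) • P1 - (2 * β * δ) • P2)
    (hF2 : F2 = (γ ^ 2) • P0 - (γ * δ) • P1 + (δ ^ 2) • P2) :
    U * F0 + Y * U * F1 + Y ^ 2 * U * F2 = 0 ∧
      (Matrix.fromCols U (Y * U)).rank = ℓ := by
  subst hF0 hF1 hF2
  have hcomm := commute_smul_add_smul_one Z α β γ δ
  have hBY : (γ • Z + δ • 1) * Y = α • Z + β • 1 :=
    hY ▸ mul_mul_nonsing_inv_of_commute hcomm hZinv
  have hBY_comm : Commute (γ • Z + δ • 1) Y := hY ▸ commute_mul_nonsing_inv hcomm hZinv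
  have hB2 : IsUnit ((γ • Z + δ • 1) ^ 2).det := by rw [det_pow]; exact hZinv.pow 2
  have heq' : quadLeftEval U P0 P1 P2 Z = 0 := heq
  refine ⟨?_, (rank_fromCols_moebius U hdet hZinv hBY).trans hrank⟩
  refine (nonsing_inv_mul_cancel_left _ (quadLeftEval U _ _ _ Y) hB2).symm.trans ?_
  rw [← quadLeftEvalHomog_mul_left hBY_comm, hBY, quadLeftEvalHomog_moebius, heq', smul_zero,
    Matrix.mul_zero]
end

section
/- Let B̂, C0 ∈ ℝ^{n×n} with B̂ invertible, let u, v̂ ∈ ℝ^{1×n} be row vectors with v̂ − u·B̂ + u·C0 = 0, and let h ≠ 0. Set R = C0·B̂⁻¹ and X = h⁻¹·(R − I). Then −u·X = h⁻¹·v̂·B̂⁻¹; equivalently, (−Xᵀ)·uᵀ = (h⁻¹·v̂·B̂⁻¹)ᵀ, so that the off-diagonal entries of −Xᵀ together with the vectors uᵀ and (h⁻¹·v̂·B̂⁻¹)ᵀ form a triplet representation of −Xᵀ. -/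
open Matrix

/-- A triplet representation for `−Xᵀ` where `X = h⁻¹(R − I)`, `R = C0·B̂⁻¹`:
`−u·X = h⁻¹·v̂·B̂⁻¹`, equivalently `(−Xᵀ)·uᵀ = (h⁻¹·v̂·B̂⁻¹)ᵀ`. -/
theorem triplet_representation_for_negX {n : ℕ}
    (Bhat C0 : Matrix (Fin n) (Fin n) ℝ) (hBhat : IsUnit Bhat.det)
    (u vhat : Fin n → ℝ)
    (hv : vhat - Matrix.vecMul u Bhat + Matrix.vecMul u C0 = 0)
    (h : ℝ) (hh : h ≠ 0)
    (R X : Matrix (Fin n) (Fin n) ℝ)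
    (hR : R = C0 * Bhat⁻¹)
    (hX : X = h⁻¹ • (R - 1)) :
    Matrix.vecMul u (-X) = h⁻¹ • Matrix.vecMul vhat Bhat⁻¹ ∧
      (-Xᵀ).mulVec u = h⁻¹ • Matrix.vecMul vhat Bhat⁻¹ := by
  have hvhat : vhat = Matrix.vecMul u Bhat - Matrix.vecMul u C0 := by
    have := hv
    funext i
    have := congrFun hv i
    simp at this ⊢
    linarith
  have key : Matrix.vecMul u (-X) = h⁻¹ • Matrix.vecMul vhat Bhat⁻¹ := by
    subst hX hR hvhat
    rw [Matrix.sub_vecMul]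
    rw [show Matrix.vecMul (Matrix.vecMul u Bhat) Bhat⁻¹ = u by
      rw [Matrix.vecMul_vecMul, Matrix.mul_nonsing_inv _ hBhat, Matrix.vecMul_one]]
    rw [show Matrix.vecMul (Matrix.vecMul u C0) Bhat⁻¹ = Matrix.vecMul u (C0 * Bhat⁻¹) from
      Matrix.vecMul_vecMul ..]
    funext i
    simp [Matrix.vecMul, dotProduct, Matrix.sub_apply, Matrix.one_apply,
      Finset.sum_sub_distrib, mul_sub, sub_mul, Finset.mul_sum, mul_comm,
      Finset.sum_ite_eq, mul_ite]
    ring_nf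
    exact Finset.sum_congr rfl fun j _ => by ring
  refine ⟨key, ?_⟩
  rw [← key]
  ext i
  simp [Matrix.mulVec, Matrix.vecMul, dotProduct, mul_comm]
end

section
/- Let n = p + q and let Ã, B̃, C̃, B̂ ∈ ℝ^{n×n} be partitioned into 2×2 blocks with diagonal blocks of sizes p and q, where C̃ = [[C11, 0],[C21, 0]] has zero second block column and B̂ = [[B11, B12],[B21, B22]]. Suppose B̂ and B22 are invertible and that R := C̃·B̂⁻¹ satisfies R²·Ã − R·B̃ + C̃ = 0. Define Ψ = −B12·B22⁻¹ and S = B11 + Ψ·B21, assume S is invertible, and set Y = (C11 + Ψ·C21)·S⁻¹ and U = [I_p, Ψ] ∈ ℝ^{p×n}. Then Y²·U·Ã − Y·U·B̃ + U·C̃ = 0; that is, (Y, [I, Ψ]) satisfies the left invariant pair equation for F̃(y) = Ã·y² − B̃·y + C̃. -/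
/-!
Multiplying the quadratic matrix equation on the left by `U = [I, Ψ]` turns it into the one for
`Y`, as soon as `U` intertwines `R` and `Y`, i.e. `U R = Y U`. The intertwining holds because `Ψ`
is chosen to annihilate the second block column of `U B̂`: then `U B̂ = S [I, 0]`, and since `C̃`
has zero second block column also `U C̃ = (C11 + Ψ C21) [I, 0]`, whence
`U C̃ B̂⁻¹ = (C11 + Ψ C21) S⁻¹ U B̂ B̂⁻¹ = Y U`.
-/

open Matrix

namespace Matrix

variable {m n p q α : Type*} [Fintype m] [DecidableEq m] [Fintype n] [DecidableEq n]

theorem quadratic_left_invariant_pair_of_mul_eq [Ring α] {U : Matrix m n α}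
    {R A B C : Matrix n n α} {Y : Matrix m m α} (hUR : U * R = Y * U)
    (hR : R ^ 2 * A - R * B + C = 0) :
    Y ^ 2 * U * A - Y * U * B + U * C = 0 := by
  have hUR2 : U * R ^ 2 = Y ^ 2 * U := by
    rw [sq, sq, ← Matrix.mul_assoc, hUR, Matrix.mul_assoc, hUR, Matrix.mul_assoc]
  simpa only [Matrix.mul_add, Matrix.mul_sub, Matrix.mul_zero, ← Matrix.mul_assoc, hUR2, hUR]
    using congrArg (U * ·) hR

theorem mul_mul_inv_eq_of_mul_eq_mul [CommRing α] {U E : Matrix m n α} {C B : Matrix n n α}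
    {K S : Matrix m m α} (hUC : U * C = K * E) (hUB : U * B = S * E)
    (hB : IsUnit B.det) (hS : IsUnit S.det) :
    U * (C * B⁻¹) = K * S⁻¹ * U := by
  have hE : E = S⁻¹ * U * B := by
    rw [Matrix.mul_assoc, hUB, ← Matrix.mul_assoc, nonsing_inv_mul S hS, Matrix.one_mul]
  rw [← Matrix.mul_assoc, hUC, hE, Matrix.mul_assoc, Matrix.mul_assoc, Matrix.mul_assoc,
    mul_nonsing_inv B hB, Matrix.mul_one, Matrix.mul_assoc]

variable [Fintype p] [DecidableEq p] [Fintype q] [Ring α]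

theorem fromCols_one_mul_fromBlocks_zero_zero (Ψ : Matrix p q α) (C₁₁ : Matrix p p α)
    (C₂₁ : Matrix q p α) :
    (fromCols 1 Ψ : Matrix p (p ⊕ q) α) * (fromBlocks C₁₁ 0 C₂₁ 0 : Matrix (p ⊕ q) (p ⊕ q) α) =
      (C₁₁ + Ψ * C₂₁) * (fromCols 1 0 : Matrix p (p ⊕ q) α) := by
  simp [fromCols_mul_fromBlocks]

theorem fromCols_one_mul_fromBlocks_of_mul_eq_neg {Ψ : Matrix p q α} {B₁₁ : Matrix p p α}
    {B₁₂ : Matrix p q α} {B₂₁ : Matrix q p α} {B₂₂ : Matrix q q α} (hΨ : Ψ * B₂₂ = -B₁₂) :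
    (fromCols 1 Ψ : Matrix p (p ⊕ q) α) * fromBlocks B₁₁ B₁₂ B₂₁ B₂₂ =
      (B₁₁ + Ψ * B₂₁) * (fromCols 1 0 : Matrix p (p ⊕ q) α) := by
  simp [fromCols_mul_fromBlocks, hΨ]

end Matrix

/-- Deflating the spurious zero eigenvalues of `R = C̃·B̂⁻¹`: the pair
`(Y, [I, Ψ])` with `Ψ = −B12·B22⁻¹`, `S = B11 + Ψ·B21`, `Y = (C11 + Ψ·C21)·S⁻¹` satisfies
the left invariant pair equation for `F̃(y) = Ã y² − B̃ y + C̃`. -/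
theorem deflated_invariant_pair {p q : ℕ}
    (Atil Btil : Matrix (Fin p ⊕ Fin q) (Fin p ⊕ Fin q) ℝ)
    (C11 : Matrix (Fin p) (Fin p) ℝ) (C21 : Matrix (Fin q) (Fin p) ℝ)
    (B11 : Matrix (Fin p) (Fin p) ℝ) (B12 : Matrix (Fin p) (Fin q) ℝ)
    (B21 : Matrix (Fin q) (Fin p) ℝ) (B22 : Matrix (Fin q) (Fin q) ℝ)
    (Ctil Bhat : Matrix (Fin p ⊕ Fin q) (Fin p ⊕ Fin q) ℝ)
    (hCtil : Ctil = Matrix.fromBlocks C11 0 C21 0)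
    (hBhat : Bhat = Matrix.fromBlocks B11 B12 B21 B22)
    (hBhatInv : IsUnit Bhat.det) (hB22Inv : IsUnit B22.det)
    (R : Matrix (Fin p ⊕ Fin q) (Fin p ⊕ Fin q) ℝ) (hR : R = Ctil * Bhat⁻¹)
    (hRsol : R ^ 2 * Atil - R * Btil + Ctil = 0)
    (Ψ : Matrix (Fin p) (Fin q) ℝ) (hΨ : Ψ = -(B12 * B22⁻¹))
    (S : Matrix (Fin p) (Fin p) ℝ) (hS : S = B11 + Ψ * B21) (hSInv : IsUnit S.det)
    (Y : Matrix (Fin p) (Fin p) ℝ) (hY : Y = (C11 + Ψ * C21) * S⁻¹)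
    (U : Matrix (Fin p) (Fin p ⊕ Fin q) ℝ) (hU : U = Matrix.fromCols 1 Ψ) :
    Y ^ 2 * U * Atil - Y * U * Btil + U * Ctil = 0 := by
  have hΨB22 : Ψ * B22 = -B12 := by
    rw [hΨ, Matrix.neg_mul, Matrix.mul_assoc, nonsing_inv_mul B22 hB22Inv, Matrix.mul_one]
  have hUC : U * Ctil = (C11 + Ψ * C21) * (fromCols 1 0 : Matrix (Fin p) (Fin p ⊕ Fin q) ℝ) := by
    rw [hU, hCtil, fromCols_one_mul_fromBlocks_zero_zero]
  have hUB : U * Bhat = S * (fromCols 1 0 : Matrix (Fin p) (Fin p ⊕ Fin q) ℝ) := by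
    rw [hU, hBhat, hS, fromCols_one_mul_fromBlocks_of_mul_eq_neg hΨB22]
  have hUR : U * R = Y * U := by
    rw [hR, hY, mul_mul_inv_eq_of_mul_eq_mul hUC hUB hBhatInv hSInv]
  exact quadratic_left_invariant_pair_of_mul_eq hUR hRsol
end

section
/- Let n = p + q and let C̃, B̂ ∈ ℝ^{n×n} be partitioned into 2×2 blocks with diagonal blocks of sizes p and q, where C̃ = [[C11, 0],[C21, 0]] and B̂ = [[B11, B12],[B21, B22]], with B̂ and B22 invertible. Define Ψ = −B12·B22⁻¹, S = B11 + Ψ·B21 (assumed invertible), Y = (C11 + Ψ·C21)·S⁻¹, and, for h ≠ 0, X = h⁻¹·(Y − I). Let u = [u1, u2] ∈ ℝ^{1×n} (with u1 ∈ ℝ^{1×p}) and v̂ = [v̂1, v̂2] ∈ ℝ^{1×n} be row vectors with v̂ = u·B̂ − u·C̃. Then: (i) u2 − u1·Ψ = v̂2·B22⁻¹; and (ii) (v̂1 + v̂2·B22⁻¹·(C21 − B21))·S⁻¹ = −h·u1·X. In particular, the off-diagonal entries of −Xᵀ together with u1ᵀ and (h⁻¹·(v̂1 + v̂2·B22⁻¹·(C21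 − B21))·S⁻¹)ᵀ form a triplet representation of −Xᵀ. -/
open Matrix

/-- A triplet representation for `−Xᵀ` in the deflated case: with `Ψ = −B12·B22⁻¹`,
`S = B11 + Ψ·B21`, `Y = (C11 + Ψ·C21)·S⁻¹`, `X = h⁻¹(Y − 1)` and `v̂ = u·B̂ − u·C̃`, one has
(i) `u2 − u1·Ψ = v̂2·B22⁻¹` and (ii) `(v̂1 + v̂2·B22⁻¹·(C21 − B21))·S⁻¹ = −h·u1·X`. -/
theorem triplet_representation_deflated {p q : ℕ}
    (C11 : Matrix (Fin p) (Fin p) ℝ) (C21 : Matrix (Fin q) (Fin p) ℝ)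
    (B11 : Matrix (Fin p) (Fin p) ℝ) (B12 : Matrix (Fin p) (Fin q) ℝ)
    (B21 : Matrix (Fin q) (Fin p) ℝ) (B22 : Matrix (Fin q) (Fin q) ℝ)
    (Ctil Bhat : Matrix (Fin p ⊕ Fin q) (Fin p ⊕ Fin q) ℝ)
    (hCtil : Ctil = Matrix.fromBlocks C11 0 C21 0)
    (hBhat : Bhat = Matrix.fromBlocks B11 B12 B21 B22)
    (hBhatInv : IsUnit Bhat.det) (hB22Inv : IsUnit B22.det)
    (Ψ : Matrix (Fin p) (Fin q) ℝ) (hΨ : Ψ = -(B12 * B22⁻¹))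
    (S : Matrix (Fin p) (Fin p) ℝ) (hS : S = B11 + Ψ * B21) (hSInv : IsUnit S.det)
    (Y : Matrix (Fin p) (Fin p) ℝ) (hY : Y = (C11 + Ψ * C21) * S⁻¹)
    (h : ℝ) (hh : h ≠ 0)
    (X : Matrix (Fin p) (Fin p) ℝ) (hX : X = h⁻¹ • (Y - 1))
    (u vhat : Fin p ⊕ Fin q → ℝ)
    (hvhat : vhat = Matrix.vecMul u Bhat - Matrix.vecMul u Ctil) :
    ((fun j => u (Sum.inr j)) - Matrix.vecMul (fun i => u (Sum.inl i)) Ψ =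
        Matrix.vecMul (fun j => vhat (Sum.inr j)) B22⁻¹) ∧
      Matrix.vecMul ((fun i => vhat (Sum.inl i)) +
          Matrix.vecMul (fun j => vhat (Sum.inr j)) (B22⁻¹ * (C21 - B21))) S⁻¹ =
        -(h • Matrix.vecMul (fun i => u (Sum.inl i)) X) := by
  set u1 : Fin p → ℝ := fun i => u (Sum.inl i) with hu1
  set u2 : Fin q → ℝ := fun j => u (Sum.inr j) with hu2
  have hB : B22 * B22⁻¹ = 1 := Matrix.mul_nonsing_inv _ hB22Inv
  have hSS : S * S⁻¹ = 1 := Matrix.mul_nonsing_inv _ hSInv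
  have h1 : (fun i => vhat (Sum.inl i)) =
      u1 ᵥ* B11 + u2 ᵥ* B21 - (u1 ᵥ* C11 + u2 ᵥ* C21) := by
    funext i
    simp [hvhat, hCtil, hBhat, vecMul_fromBlocks, Function.comp, hu1, hu2]
    rfl
  have h2 : (fun j => vhat (Sum.inr j)) = u1 ᵥ* B12 + u2 ᵥ* B22 := by
    funext j
    simp [hvhat, hCtil, hBhat, vecMul_fromBlocks, Function.comp, hu1, hu2]
    rfl
  have key : u2 - u1 ᵥ* Ψ = (fun j => vhat (Sum.inr j)) ᵥ* B22⁻¹ := by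
    rw [h2, Matrix.add_vecMul, Matrix.vecMul_vecMul, Matrix.vecMul_vecMul, hB,
      Matrix.vecMul_one, hΨ, Matrix.vecMul_neg]
    abel
  refine ⟨key, ?_⟩
  have key2 : (fun i => vhat (Sum.inl i)) +
      ((fun j => vhat (Sum.inr j)) ᵥ* (B22⁻¹ * (C21 - B21))) =
      u1 ᵥ* (S - (C11 + Ψ * C21)) := by
    rw [← Matrix.vecMul_vecMul, ← key, h1, hS]
    simp only [Matrix.vecMul_vecMul, Matrix.vecMul_sub, Matrix.vecMul_add,
      Matrix.sub_vecMul, Matrix.add_vecMul, Matrix.mul_sub]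
    abel
  have hsm : ∀ (c : ℝ) (A : Matrix (Fin p) (Fin p) ℝ) (x : Fin p → ℝ),
      x ᵥ* (c • A) = c • (x ᵥ* A) := by
    intro c A x
    ext i
    simp [Matrix.vecMul, dotProduct, Finset.mul_sum, mul_assoc, mul_left_comm]
  rw [key2, Matrix.vecMul_vecMul, Matrix.sub_mul, hSS, ← hY, Matrix.vecMul_sub,
    Matrix.vecMul_one, hX, hsm, smul_smul, mul_inv_cancel₀ hh, one_smul,
    Matrix.vecMul_sub, Matrix.vecMul_one]
  abel
end

section
/- Let P(z) = P0 + P1·z + P2·z² with P0, P1, P2 ∈ ℂ^{n×n} be regular (the polynomial p(z) = det P(z) is not identically zero), let α, β, γ, δ ∈ ℂ with αδ − βγ ≠ 0, and define F0 = α²·P0 − αβ·P1 + β²·P2, F1 = −2αγ·P0 + (αδ + βγ)·P1 − 2βδ·P2, F2 = γ²·P0 − γδ·P1 + δ²·P2, and q(y) = det(F0 + F1·y + F2·y²). Then q is not identically zero (F is regular), and for every λ ∈ ℂ with γλ + δ ≠ 0, the multiplicity of λ as a root of p equals the multiplicity of (αλ + β)/(γλ + δ) as a root of q. -/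
open Matrix Polynomial

/-!
Clearing denominators in `F(y) = (α - γy)² P(z)`, `z = (δy - β)/(α - γy)`, gives
`q(y) = (α - γy)^(2n) p(z)`: `q` is `p`, read as a binary form of degree `2n`, pulled back along
the inverse Möbius map. Writing `p = (z - λ)^m r` with `r(λ) ≠ 0`, the pull-back is
`(γλ + δ)^m (y - μ)^m` times the pull-back of `r`, `μ = (αλ + β)/(γλ + δ)`, and the latter takes
at `μ` a nonzero multiple of the value `r(λ)`.
-/

theorem ne_zero_or_ne_zero_of_mul_sub_mul_ne_zero {K : Type*} [Field K] {a b c d : K}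
    (h : a * d - b * c ≠ 0) : a ≠ 0 ∨ c ≠ 0 := by
  contrapose! h
  simp [h.1, h.2]

namespace Polynomial

variable {K : Type*} [Field K]

theorem infinite_setOf_sub_mul_ne_zero [Infinite K] {a c : K} (hac : a ≠ 0 ∨ c ≠ 0) :
    {y : K | a - c * y ≠ 0}.Infinite := by
  refine Set.Finite.infinite_compl (s := {y | a - c * y = 0})
    (Set.Subsingleton.finite fun y₁ hy₁ y₂ hy₂ => ?_)
  simp only [Set.mem_ofPred_eq, sub_eq_zero] at hy₁ hy₂
  have hc : c ≠ 0 := by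
    rintro rfl
    simp_all
  exact mul_left_cancel₀ hc (hy₁.symm.trans hy₂)

/-- `(a - c y) ^ N * p ((d y - b) / (a - c y))`: `p`, viewed as a binary form of degree `N`,
pulled back along the inverse of the Möbius map `z ↦ (a z + b) / (c z + d)`. -/
noncomputable def moebiusTransform (a b c d : K) (N : ℕ) (p : K[X]) : K[X] :=
  ∑ k ∈ Finset.range (N + 1), C (p.coeff k) * (C d * X - C b) ^ k * (C a - C c * X) ^ (N - k)

variable {a b c d : K} {N : ℕ} {p : K[X]}

theorem eval_moebiusTransform (hp : p.natDegree ≤ N) {y : K} (hy : a - c * y ≠ 0) :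
    (moebiusTransform a b c d N p).eval y =
      (a - c * y) ^ N * p.eval ((d * y - b) / (a - c * y)) := by
  rw [eval_eq_sum_range' (Nat.lt_succ_of_le hp), Finset.mul_sum]
  simp only [moebiusTransform, eval_finsetSum, eval_mul, eval_pow, eval_sub, eval_C, eval_X]
  refine Finset.sum_congr rfl fun k hk => ?_
  rw [div_pow, ← pow_mul_pow_sub _ (Nat.lt_succ_iff.mp (Finset.mem_range.mp hk))]
  linear_combination
    (-(p.coeff k * (d * y - b) ^ k * (a - c * y) ^ (N - k))) * mul_inv_cancel₀ (pow_ne_zero k hy)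

theorem eval_moebiusTransform_div (hdet : a * d - b * c ≠ 0) (hp : p.natDegree ≤ N) {l : K}
    (hl : c * l + d ≠ 0) :
    (moebiusTransform a b c d N p).eval ((a * l + b) / (c * l + d)) =
      ((a * d - b * c) / (c * l + d)) ^ N * p.eval l := by
  set μ := (a * l + b) / (c * l + d)
  have hμ : (c * l + d) * μ = a * l + b := mul_div_cancel₀ _ hl
  have hden : a - c * μ = (a * d - b * c) / (c * l + d) := by
    rw [eq_div_iff hl]
    linear_combination (-c) * hμ
  have hden0 : a - c * μ ≠ 0 := hden ▸ div_ne_zero hdet hl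
  have hinv : (d * μ - b) / (a - c * μ) = l := by
    rw [div_eq_iff hden0]
    linear_combination hμ
  rw [eval_moebiusTransform hp hden0, hinv, hden]

theorem eq_moebiusTransform_of_eval_eq [Infinite K] (hac : a ≠ 0 ∨ c ≠ 0)
    (hp : p.natDegree ≤ N) {q : K[X]}
    (hq : ∀ y, a - c * y ≠ 0 →
      q.eval y = (a - c * y) ^ N * p.eval ((d * y - b) / (a - c * y))) :
    q = moebiusTransform a b c d N p :=
  eq_of_infinite_eval_eq _ _ <| (infinite_setOf_sub_mul_ne_zero hac).mono fun y hy => by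
    rw [Set.mem_ofPred_eq, hq y hy, eval_moebiusTransform hp hy]

theorem moebiusTransform_X_sub_C_pow_mul [Infinite K] (hac : a ≠ 0 ∨ c ≠ 0) (l : K) (m : ℕ)
    {r : K[X]} (hr : r.natDegree ≤ N) :
    moebiusTransform a b c d (m + N) ((X - C l) ^ m * r) =
      (C (c * l + d) * X - C (a * l + b)) ^ m * moebiusTransform a b c d N r := by
  refine (eq_moebiusTransform_of_eval_eq hac ?_ fun y hy => ?_).symm
  · refine natDegree_mul_le.trans (add_le_add ?_ hr)
    simp [natDegree_pow]
  · have hlin : (c * l + d) * y - (a * l + b) = (a - c * y) * ((d * y - b) / (a - c * y) - l) := by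
      rw [mul_sub, mul_div_cancel₀ _ hy]
      ring
    simp only [eval_mul, eval_pow, eval_sub, eval_C, eval_X, eval_moebiusTransform hr hy]
    rw [hlin, mul_pow, pow_add]
    ring

theorem exists_moebiusTransform_eq_X_sub_C_pow_mul [Infinite K] (hdet : a * d - b * c ≠ 0)
    (hp0 : p ≠ 0) (hp : p.natDegree ≤ N) {l : K} (hl : c * l + d ≠ 0) :
    ∃ s : K[X], moebiusTransform a b c d N p =
        (X - C ((a * l + b) / (c * l + d))) ^ p.rootMultiplicity l * s ∧
      ¬s.IsRoot ((a * l + b) / (c * l + d)) := by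
  set m := p.rootMultiplicity l
  obtain ⟨r, hpr, hrl⟩ := exists_eq_pow_rootMultiplicity_mul_and_not_dvd p hp0 l
  rw [dvd_iff_isRoot] at hrl
  have hr0 : r ≠ 0 := by
    rintro rfl
    simp at hrl
  have hdeg : m + r.natDegree = p.natDegree := by
    rw [hpr, natDegree_mul (pow_ne_zero _ (X_sub_C_ne_zero l)) hr0, natDegree_pow,
      natDegree_X_sub_C, mul_one]
  have hlin : C (c * l + d) * X - C (a * l + b) =
      C (c * l + d) * (X - C ((a * l + b) / (c * l + d))) := by
    rw [mul_sub, ← C_mul, mul_div_cancel₀ _ hl]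
  refine ⟨C ((c * l + d) ^ m) * moebiusTransform a b c d (N - m) r, ?_, ?_⟩
  · rw [hpr, show N = m + (N - m) by omega,
      moebiusTransform_X_sub_C_pow_mul (ne_zero_or_ne_zero_of_mul_sub_mul_ne_zero hdet) l m
        (show r.natDegree ≤ N - m by omega), hlin, mul_pow, C_pow, Nat.add_sub_cancel_left]
    ring
  · rw [IsRoot, eval_mul, eval_C, eval_moebiusTransform_div hdet (by omega) hl]
    exact mul_ne_zero (pow_ne_zero _ hl) (mul_ne_zero (pow_ne_zero _ (div_ne_zero hdet hl)) hrl)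

theorem rootMultiplicity_moebiusTransform [Infinite K] (hdet : a * d - b * c ≠ 0) (hp0 : p ≠ 0)
    (hp : p.natDegree ≤ N) {l : K} (hl : c * l + d ≠ 0) :
    (moebiusTransform a b c d N p).rootMultiplicity ((a * l + b) / (c * l + d)) =
      p.rootMultiplicity l := by
  obtain ⟨s, hps, hs⟩ := exists_moebiusTransform_eq_X_sub_C_pow_mul hdet hp0 hp hl
  have hs0 : s ≠ 0 := by
    rintro rfl
    simp at hs
  rw [hps, mul_comm (_ ^ _), rootMultiplicity_mul_X_sub_C_pow hs0, rootMultiplicity_eq_zero hs,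
    zero_add]

theorem moebiusTransform_ne_zero [Infinite K] (hdet : a * d - b * c ≠ 0) (hp0 : p ≠ 0)
    (hp : p.natDegree ≤ N) : moebiusTransform a b c d N p ≠ 0 := by
  obtain ⟨l, hl⟩ : ∃ l, c * l + d ≠ 0 := by
    by_cases hd : d = 0
    · refine ⟨1, ?_⟩
      contrapose! hdet
      simp_all
    · exact ⟨0, by simpa using hd⟩
  obtain ⟨s, hps, hs⟩ := exists_moebiusTransform_eq_X_sub_C_pow_mul hdet hp0 hp hl
  rw [hps]
  refine mul_ne_zero (pow_ne_zero _ (X_sub_C_ne_zero _)) ?_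
  rintro rfl
  simp at hs

theorem natDegree_det_le {R ι : Type*} [CommRing R] [Fintype ι] [DecidableEq ι]
    (M : Matrix ι ι R[X]) {k : ℕ} (hM : ∀ i j, (M i j).natDegree ≤ k) :
    M.det.natDegree ≤ Fintype.card ι * k := by
  rw [det_apply']
  refine natDegree_sum_le_of_forall_le _ _ fun σ _ => natDegree_mul_le.trans ?_
  rw [natDegree_intCast, zero_add]
  refine (natDegree_prod_le _ _).trans ((Finset.sum_le_card_nsmul _ _ k fun i _ => hM _ _).trans ?_)
  rw [smul_eq_mul, Finset.card_univ]

end Polynomial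

theorem eval_quadDetPoly {n : ℕ} (P0 P1 P2 : Matrix (Fin n) (Fin n) ℂ) (y : ℂ) :
    (quadDetPoly P0 P1 P2).eval y = (P0 + y • P1 + y ^ 2 • P2).det := by
  rw [quadDetPoly, ← coe_evalRingHom, RingHom.map_det]
  congr 1
  ext i j
  simp only [RingHom.mapMatrix_apply, Matrix.map_apply, Matrix.add_apply, Matrix.smul_apply,
    smul_eq_mul, coe_evalRingHom, eval_add, eval_mul, eval_pow, eval_C, eval_X]

theorem natDegree_quadDetPoly_le {n : ℕ} (P0 P1 P2 : Matrix (Fin n) (Fin n) ℂ) :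
    (quadDetPoly P0 P1 P2).natDegree ≤ 2 * n := by
  refine (natDegree_det_le _ fun i j => ?_).trans_eq (by rw [Fintype.card_fin, mul_comm])
  simp only [Matrix.add_apply, Matrix.smul_apply, Matrix.map_apply, smul_eq_mul]
  compute_degree

theorem quadDetPoly_moebius {n : ℕ} (P0 P1 P2 : Matrix (Fin n) (Fin n) ℂ) {α β γ δ : ℂ}
    (hαγ : α ≠ 0 ∨ γ ≠ 0) :
    quadDetPoly (α ^ 2 • P0 - (α * β) • P1 + β ^ 2 • P2)
        ((-(2 * α * γ)) • P0 + (α * δ + β * γ) • P1 - (2 * β * δ) • P2)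
        (γ ^ 2 • P0 - (γ * δ) • P1 + δ ^ 2 • P2) =
      moebiusTransform α β γ δ (2 * n) (quadDetPoly P0 P1 P2) := by
  refine eq_moebiusTransform_of_eval_eq hαγ (natDegree_quadDetPoly_le P0 P1 P2) fun y hy => ?_
  set z := (δ * y - β) / (α - γ * y)
  have hz : (α - γ * y) * z = δ * y - β := mul_div_cancel₀ _ hy
  have hmat : (α ^ 2 • P0 - (α * β) • P1 + β ^ 2 • P2)
        + y • ((-(2 * α * γ)) • P0 + (α * δ + β * γ) • P1 - (2 * β * δ) • P2)
        + y ^ 2 • (γ ^ 2 • P0 - (γ * δ) • P1 + δ ^ 2 • P2) =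
      (α - γ * y) ^ 2 • (P0 + z • P1 + z ^ 2 • P2) := by
    ext i j
    simp only [Matrix.add_apply, Matrix.sub_apply, Matrix.smul_apply, smul_eq_mul]
    linear_combination (-(P1 i j) * (α - γ * y) - P2 i j * ((α - γ * y) * z + δ * y - β)) * hz
  rw [eval_quadDetPoly, eval_quadDetPoly, hmat, det_smul, Fintype.card_fin, ← pow_mul]

/-- A Möbius transformation maps a regular quadratic matrix polynomial to a regular one, and
the finite eigenvalues `λ` with `γλ + δ ≠ 0` of `P` to eigenvalues `(αλ + β)/(γλ + δ)` of `F`,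
preserving multiplicities. -/
theorem moebius_transform_eigenvalues {n : ℕ}
    (P0 P1 P2 : Matrix (Fin n) (Fin n) ℂ)
    (hreg : quadDetPoly P0 P1 P2 ≠ 0)
    (α β γ δ : ℂ) (hdet : α * δ - β * γ ≠ 0)
    (F0 F1 F2 : Matrix (Fin n) (Fin n) ℂ)
    (hF0 : F0 = (α ^ 2) • P0 - (α * β) • P1 + (β ^ 2) • P2)
    (hF1 : F1 = (-(2 * α * γ)) • P0 + (α * δ + β * γ) • P1 - (2 * β * δ) • P2)
    (hF2 : F2 = (γ ^ 2) • P0 - (γ * δ) • P1 + (δ ^ 2) • P2) :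
    quadDetPoly F0 F1 F2 ≠ 0 ∧
      ∀ l : ℂ, γ * l + δ ≠ 0 →
        (quadDetPoly P0 P1 P2).rootMultiplicity l =
          (quadDetPoly F0 F1 F2).rootMultiplicity ((α * l + β) / (γ * l + δ)) := by
  subst hF0 hF1 hF2
  have hdeg := natDegree_quadDetPoly_le P0 P1 P2
  rw [quadDetPoly_moebius P0 P1 P2 (ne_zero_or_ne_zero_of_mul_sub_mul_ne_zero hdet)]
  exact ⟨moebiusTransform_ne_zero hdet hreg hdeg,
    fun l hl => (rootMultiplicity_moebiusTransform hdet hreg hdeg hl).symm⟩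
end
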